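/- arXiv:1510.00078 — 7 statements merged into one kernel-verified Lean document; each statement's English description precedes it below -/
import Mathlib

section
/- For every function c from the 2-element subsets of ω^k + 1 to {red, blue}, there is either a red-homogeneous subset order-homeomorphic to ω+1 (i.e., order-isomorphic to ω+1 and closed in its supremum) or a blue-homogeneous set of k+1 points. In symbols: ω^k + 1 →_cl (ω+1, k+1)². -/
/-!
Induction on `k`, writing `ω ^ (k + 1) + 1 = ω ^ k * ω + 1` with top point `μ = ω ^ k * ω`.
If the points coloured red with `μ` are cofinal in `μ`, pick an `ω`-sequence of them converging
to `μ` and apply the infinite Ramsey theorem: a red infinite subsequence together with its limit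
`μ` is a closed copy of `ω + 1`, and a blue one contains `k + 2` blue points. Otherwise a whole
tail below `μ` is blue with `μ`; that tail contains a translate `ω ^ k * n + (ω ^ k + 1)` of
`ω ^ k + 1`, translation is a normal function and so preserves closed copies, and a blue
`(k + 1)`-set found there extends by `μ` to a blue `(k + 2)`-set.
-/

open Ordinal Set

noncomputable section

instance : TopologicalSpace Ordinal := Preorder.topology Ordinal
instance : OrderTopology Ordinal := ⟨rfl⟩

/-- `X` is order-isomorphic to the ordinal `a`. -/
def IsOrderCopy (X : Set Ordinal) (a : Ordinal) : Prop :=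
  Nonempty (X ≃o (Iio a))

/-- `X` is order-isomorphic to the ordinal `a` and closed in its supremum. -/
def IsClosedCopy (X : Set Ordinal) (a : Ordinal) : Prop :=
  IsOrderCopy X a ∧ ∀ S ⊆ X, S.Nonempty → sSup S < sSup X → sSup S ∈ X

/-- `X` is homeomorphic to the ordinal `a` with its order topology. -/
def IsTopCopy (X : Set Ordinal) (a : Ordinal) : Prop :=
  Nonempty (X ≃ₜ (Iio a))

/-- `X` is homogeneous for color `b` (red = `true`, blue = `false`):
every pair from `X` gets color `b`. -/
def Homog (c : Ordinal → Ordinal → Bool) (b : Bool) (X : Set Ordinal) : Prop :=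
  ∀ x ∈ X, ∀ y ∈ X, x < y → c x y = b

/-- There is a blue-homogeneous set of `m` points inside `β`. -/
def BlueSet (c : Ordinal → Ordinal → Bool) (β : Ordinal) (m : ℕ) : Prop :=
  ∃ H : Finset Ordinal, (H : Set Ordinal) ⊆ Iio β ∧ H.card = m ∧ Homog c false (H : Set Ordinal)

/-- The closed partition relation `β →_cl (a, m)²`. -/
def ToClosed2 (β a : Ordinal) (m : ℕ) : Prop :=
  ∀ c : Ordinal → Ordinal → Bool,
    (∃ X ⊆ Iio β, IsClosedCopy X a ∧ Homog c true X) ∨ BlueSet c β m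

/-- The topological partition relation `β →_top (a, m)²`. -/
def ToTop2 (β a : Ordinal) (m : ℕ) : Prop :=
  ∀ c : Ordinal → Ordinal → Bool,
    (∃ X ⊆ Iio β, IsTopCopy X a ∧ Homog c true X) ∨ BlueSet c β m

/-- The classical partition relation `β → (a, m)²`. -/
def ToPlain2 (β a : Ordinal) (m : ℕ) : Prop :=
  ∀ c : Ordinal → Ordinal → Bool,
    (∃ X ⊆ Iio β, IsOrderCopy X a ∧ Homog c true X) ∨ BlueSet c β m

/-- The closed pigeonhole relation `β →_cl (a)¹_k`. -/
def ToClosed1 (β a : Ordinal) (k : ℕ) : Prop :=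
  ∀ c : Ordinal → Fin k, ∃ i, ∃ X ⊆ Iio β, (∀ x ∈ X, c x = i) ∧ IsClosedCopy X a

/-- The topological pigeonhole relation `β →_top (a)¹_k`. -/
def ToTop1 (β a : Ordinal) (k : ℕ) : Prop :=
  ∀ c : Ordinal → Fin k, ∃ i, ∃ X ⊆ Iio β, (∀ x ∈ X, c x = i) ∧ IsTopCopy X a

/-- The classical pigeonhole relation `β → (a)¹_k`. -/
def ToPlain1 (β a : Ordinal) (k : ℕ) : Prop :=
  ∀ c : Ordinal → Fin k, ∃ i, ∃ X ⊆ Iio β, (∀ x ∈ X, c x = i) ∧ IsOrderCopy X a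

/-- The closed ordinal Ramsey number `R^cl(a, m)`. -/
def Rcl (a : Ordinal) (m : ℕ) : Ordinal := sInf {β | ToClosed2 β a m}

/-- The topological ordinal Ramsey number `R^top(a, m)`. -/
def Rtop (a : Ordinal) (m : ℕ) : Ordinal := sInf {β | ToTop2 β a m}

/-- The classical pigeonhole number `P(a)_k`. -/
def Pplain (a : Ordinal) (k : ℕ) : Ordinal := sInf {β | ToPlain1 β a k}

/-- The closed pigeonhole number `P^cl(a)_k`. -/
def PclK (a : Ordinal) (k : ℕ) : Ordinal := sInf {β | ToClosed1 β a k}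

theorem Set.Infinite.exists_infinite_sep_eq {α κ : Type*} [Finite κ] {S : Set α}
    (hS : S.Infinite) (f : α → κ) : ∃ i, {y ∈ S | f y = i}.Infinite := by
  by_contra! h
  exact hS ((Set.finite_iUnion h).subset fun y hy => mem_iUnion.2 ⟨f y, hy, rfl⟩)

theorem exists_strictMono_homogeneous {κ : Type*} [Finite κ] (c : ℕ → ℕ → κ) :
    ∃ i, ∃ e : ℕ → ℕ, StrictMono e ∧ ∀ m n, m < n → c (e m) (e n) = i := by
  have step : ∀ S : {S : Set ℕ // S.Infinite}, ∃ x ∈ S.1, ∃ i : κ,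
      ∃ T : {S : Set ℕ // S.Infinite}, T.1 ⊆ S.1 ∧ ∀ y ∈ T.1, x < y ∧ c x y = i := by
    rintro ⟨S, hS⟩
    obtain ⟨x, hx⟩ := hS.nonempty
    obtain ⟨i, hi⟩ := (hS.sdiff (finite_Iic x)).exists_infinite_sep_eq (c x)
    exact ⟨x, hx, i, ⟨_, hi⟩, fun y hy => hy.1.1, fun y hy => ⟨not_le.1 hy.1.2, hy.2⟩⟩
  choose x hx col T hTS hT using step
  set S : ℕ → {S : Set ℕ // S.Infinite} := fun n => T^[n] ⟨univ, infinite_univ⟩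
  have hS : Antitone fun n => (S n).1 := antitone_nat_of_succ_le fun n => by
    simp only [S, Function.iterate_succ_apply']
    exact hTS _
  have hxS : ∀ {m n}, m < n → x (S m) < x (S n) ∧ c (x (S m)) (x (S n)) = col (S m) := by
    intro m n hmn
    have hmem : x (S n) ∈ (T (S m)).1 := by
      simpa only [S, Function.iterate_succ_apply'] using hS (Nat.succ_le_of_lt hmn) (hx (S n))
    exact hT _ _ hmem
  obtain ⟨i, hi⟩ := infinite_univ.exists_infinite_sep_eq fun n => col (S n)
  have he := Nat.nth_strictMono hi
  refine ⟨i, fun n => x (S (Nat.nth _ n)), fun m n hmn => (hxS (he hmn)).1,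
    fun m n hmn => ?_⟩
  rw [(hxS (he hmn)).2]
  exact (Nat.nth_mem_of_infinite hi m).2

theorem exists_strictMono_mem_isLUB {α : Type*} [LinearOrder α] {A : Set α} {s : ℕ → α}
    {μ : α} (hs : IsLUB (range s) μ) (hsμ : ∀ n, s n < μ)
    (hA : ∀ b < μ, ∃ a, b < a ∧ a < μ ∧ a ∈ A) :
    ∃ x : ℕ → α, StrictMono x ∧ (∀ n, x n ∈ A ∧ x n < μ) ∧ IsLUB (range x) μ := by
  have hnext : ∀ (a : ↥(A ∩ Iio μ)) (n : ℕ), ∃ b : ↥(A ∩ Iio μ), max a.1 (s n) < b.1 := by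
    rintro ⟨a, -, ha⟩ n
    obtain ⟨b, hab, hbμ, hbA⟩ := hA _ (max_lt ha (hsμ n))
    exact ⟨⟨b, hbA, hbμ⟩, hab⟩
  choose next hnext using hnext
  obtain ⟨a₀, -, ha₀μ, ha₀A⟩ := hA (s 0) (hsμ 0)
  let x : ℕ → ↥(A ∩ Iio μ) := fun n => Nat.rec ⟨a₀, ha₀A, ha₀μ⟩ (fun n a => next a n) n
  have hstep : ∀ n, max (x n).1 (s n) < (x (n + 1)).1 := fun n => hnext _ _
  refine ⟨fun n => (x n).1, strictMono_nat_of_lt_succ fun n => (le_max_left _ _).trans_lt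
    (hstep n), fun n => (x n).2, ?_, fun b hb => hs.2 ?_⟩
  · rintro _ ⟨n, rfl⟩
    exact (x n).2.2.le
  · rintro _ ⟨n, rfl⟩
    exact ((le_max_right _ _).trans_lt (hstep n)).le.trans (hb ⟨n + 1, rfl⟩)

theorem isLUB_range_mul_natCast (K : Ordinal) : IsLUB (range fun n : ℕ => K * n) (K * ω) :=
  iSup_mul_natCast K ▸ isLUB_ciSup bddAbove_of_small

theorem IsLUB.comp_strictMono {α : Type*} [Preorder α] {x : ℕ → α} {μ : α}
    (hx : Monotone x) (hμ : IsLUB (range x) μ) {e : ℕ → ℕ} (he : StrictMono e) :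
    IsLUB (range (x ∘ e)) μ :=
  ⟨fun _ ⟨n, h⟩ => h ▸ hμ.1 ⟨e n, rfl⟩, fun _ hb => hμ.2 fun _ ⟨n, h⟩ =>
    h ▸ (hx he.le_apply).trans (hb ⟨n, rfl⟩)⟩

def withTopSeq {β : Type*} (y : ℕ → β) (t : β) : WithTop ℕ → β := fun n => n.elim t y

theorem strictMono_withTopSeq {β : Type*} [Preorder β] {y : ℕ → β} {t : β}
    (hy : StrictMono y) (ht : ∀ n, y n < t) : StrictMono (withTopSeq y t) :=
  WithTop.strictMono_iff.2 ⟨hy, ht⟩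

theorem range_withTopSeq {β : Type*} (y : ℕ → β) (t : β) :
    range (withTopSeq y t) = insert t (range y) := by
  ext b
  simp only [mem_range, mem_insert_iff, WithTop.exists, withTopSeq]
  tauto

theorem Iio_omega0_add_one : Iio (ω + 1 : Ordinal) = insert ω (range Nat.cast) := by
  ext o
  simp only [mem_Iio, mem_insert_iff, mem_range, Order.lt_add_one_iff,
    le_iff_eq_or_lt, lt_omega0, eq_comm (a := o)]

theorem isOrderCopy_insert_range {y : ℕ → Ordinal} {t : Ordinal} (hy : StrictMono y)
    (ht : ∀ n, y n < t) : IsOrderCopy (insert t (range y)) (ω + 1) := by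
  have e₁ := (strictMono_withTopSeq hy ht).orderIso
  have e₂ := (strictMono_withTopSeq Nat.strictMono_cast (natCast_lt_omega0 ·)).orderIso
  rw [range_withTopSeq] at e₁ e₂
  exact ⟨e₁.symm.trans (e₂.trans (OrderIso.setCongr _ _ Iio_omega0_add_one.symm))⟩

theorem isClosedCopy_insert_range {y : ℕ → Ordinal} {t : Ordinal} (hy : StrictMono y)
    (ht : IsLUB (range y) t) : IsClosedCopy (insert t (range y)) (ω + 1) := by
  have hyt : ∀ n, y n < t := fun n => (hy n.lt_succ_self).trans_le (ht.1 ⟨n + 1, rfl⟩)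
  refine ⟨isOrderCopy_insert_range hy hyt, fun S hS hSne hSlt => ?_⟩
  have hX : IsGreatest (insert t (range y)) t := ⟨mem_insert _ _, forall_mem_insert.2
    ⟨le_rfl, forall_mem_range.2 fun n => (hyt n).le⟩⟩
  rw [hX.csSup_eq] at hSlt
  obtain ⟨N, hN⟩ : ∃ N, sSup S < y N := by
    by_contra! h
    exact hSlt.not_ge (ht.2 (forall_mem_range.2 h))
  have hSb : BddAbove S := hX.bddAbove.mono hS
  have hSfin : S.Finite := ((finite_Iio N).image y).subset fun s hs => by
    have hsN := (le_csSup hSb hs).trans_lt hN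
    rcases hS hs with rfl | ⟨n, rfl⟩
    · exact absurd (hsN.trans (hyt N)) (lt_irrefl _)
    · exact ⟨n, hy.lt_iff_lt.1 hsN, rfl⟩
  exact hS (hSne.csSup_mem hSfin)

universe u v

theorem homog_image {α : Type*} [LinearOrder α] {f : α → Ordinal} (hf : StrictMono f)
    {c : Ordinal → Ordinal → Bool} {b : Bool} {S : Set α}
    (h : ∀ x ∈ S, ∀ y ∈ S, x < y → c (f x) (f y) = b) : Homog c b (f '' S) := by
  rintro _ ⟨x, hx, rfl⟩ _ ⟨y, hy, rfl⟩ hxy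
  exact h x hx y hy (hf.lt_iff_lt.1 hxy)

theorem Homog.insert {c : Ordinal → Ordinal → Bool} {b : Bool} {X : Set Ordinal} {p : Ordinal}
    (hX : Homog c b X) (hp : ∀ x ∈ X, x < p ∧ c x p = b) : Homog c b (insert p X) := by
  rintro x (rfl | hx) y (rfl | hy) hxy
  · exact absurd hxy (lt_irrefl _)
  · exact absurd (hxy.trans (hp y hy).1) (lt_irrefl _)
  · exact (hp x hx).2
  · exact hX x hx y hy hxy

theorem IsOrderCopy.image {X : Set Ordinal} {a : Ordinal} {f : Ordinal.{u} → Ordinal.{v}}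
    (hf : StrictMono f) (hX : IsOrderCopy X a) : IsOrderCopy (f '' X) a :=
  let ⟨e⟩ := hX
  ⟨({ Equiv.Set.image f X hf.injective with map_rel_iff' := hf.le_iff_le } :
    X ≃o f '' X).symm.trans e⟩

theorem IsClosedCopy.image {X : Set Ordinal} {a : Ordinal} {f : Ordinal.{u} → Ordinal.{u}}
    (hf : Order.IsNormal f) (hX : IsClosedCopy X a) : IsClosedCopy (f '' X) a := by
  refine ⟨hX.1.image hf.strictMono, fun S hS hSne hSlt => ?_⟩
  obtain ⟨S', hS'X, rfl⟩ := subset_image_iff.1 hS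
  have hXb : BddAbove X := by
    by_contra hXb
    have hfXb : ¬BddAbove (f '' X) := fun ⟨u, hu⟩ =>
      hXb ⟨u, fun x hx => hf.strictMono.le_apply.trans (hu (mem_image_of_mem f hx))⟩
    rw [csSup_of_not_bddAbove hfXb, csSup_empty] at hSlt
    exact not_lt_bot hSlt
  have hS'ne : S'.Nonempty := hSne.of_image
  rw [← hf.map_sSup hS'ne (hXb.mono hS'X), ← hf.map_sSup (hS'ne.mono hS'X) hXb,
    hf.strictMono.lt_iff_lt] at hSlt
  rw [← hf.map_sSup hS'ne (hXb.mono hS'X)]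
  exact mem_image_of_mem f (hX.2 S' hS'X hS'ne hSlt)

theorem ToClosed2.exists_homog_Ico {β a : Ordinal} {m : ℕ} (h : ToClosed2 β a m)
    (c : Ordinal → Ordinal → Bool) (γ : Ordinal) :
    (∃ X ⊆ Ico γ (γ + β), IsClosedCopy X a ∧ Homog c true X) ∨
      ∃ H : Finset Ordinal, ↑H ⊆ Ico γ (γ + β) ∧ H.card = m ∧ Homog c false H := by
  have hγ := isNormal_add_right γ
  have hIco : ∀ x ∈ Iio β, γ + x ∈ Ico γ (γ + β) := fun x hx =>
    ⟨le_self_add, hγ.strictMono hx⟩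
  rcases h fun x y => c (γ + x) (γ + y) with ⟨X, hXβ, hX, hXred⟩ | ⟨H, hHβ, hHcard, hHblue⟩
  · exact .inl ⟨_, image_subset_iff.2 fun x hx => hIco x (hXβ hx), hX.image hγ,
      homog_image hγ.strictMono hXred⟩
  · refine .inr ⟨H.image (γ + ·), ?_, ?_, ?_⟩
    · rw [Finset.coe_image]
      exact image_subset_iff.2 fun x hx => hIco x (hHβ hx)
    · rw [Finset.card_image_of_injective _ hγ.strictMono.injective, hHcard]
    · rw [Finset.coe_image]
      exact homog_image hγ.strictMono hHblue

theorem redClosedCopy_or_blueSet_of_isLUB {c : Ordinal → Ordinal → Bool} {β μ : Ordinal}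
    {x : ℕ → Ordinal} (hx : StrictMono x) (hμ : IsLUB (range x) μ) (hμβ : μ < β)
    (hred : ∀ n, c (x n) μ = true) (m : ℕ) :
    (∃ X ⊆ Iio β, IsClosedCopy X (ω + 1) ∧ Homog c true X) ∨ BlueSet c β m := by
  obtain ⟨i, e, he, hhom⟩ := exists_strictMono_homogeneous fun a b => c (x a) (x b)
  have hy : StrictMono (x ∘ e) := hx.comp he
  have hyμ : ∀ n, x (e n) ≤ μ := fun n => hμ.1 ⟨e n, rfl⟩
  have hyhom : ∀ S : Set ℕ, Homog c i ((x ∘ e) '' S) := fun S =>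
    homog_image hy fun a _ b _ hab => hhom a b hab
  cases i with
  | true =>
    refine .inl ⟨insert μ (range (x ∘ e)), ?_, isClosedCopy_insert_range hy
      (hμ.comp_strictMono hx.monotone he), ?_⟩
    · exact insert_subset hμβ (range_subset_iff.2 fun n => (hyμ n).trans_lt hμβ)
    · refine (image_univ (f := x ∘ e) ▸ hyhom univ).insert ?_
      rintro _ ⟨n, rfl⟩
      exact ⟨(hy n.lt_succ_self).trans_le (hyμ (n + 1)), hred (e n)⟩
  | false =>
    refine .inr ⟨(Finset.range m).image (x ∘ e), ?_, ?_, ?_⟩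
    · rw [Finset.coe_image]
      exact image_subset_iff.2 fun n _ => (hyμ n).trans_lt hμβ
    · rw [Finset.card_image_of_injective _ hy.injective, Finset.card_range]
    · rw [Finset.coe_image]
      exact hyhom _

theorem ToClosed2.redClosedCopy_or_blueSet_of_blue_tail {K a : Ordinal} (hK : 0 < K) {m : ℕ}
    (h : ToClosed2 (K + 1) a m) {c : Ordinal → Ordinal → Bool} {γ : Ordinal} (hγ : γ < K * ω)
    (hblue : ∀ x, γ < x → x < K * ω → c x (K * ω) = false) :
    (∃ X ⊆ Iio (K * ω + 1), IsClosedCopy X a ∧ Homog c true X) ∨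
      BlueSet c (K * ω + 1) (m + 1) := by
  have hμ : K * ω < K * ω + 1 := Order.lt_add_one_iff.2 le_rfl
  obtain ⟨_, ⟨n, rfl⟩, hγn⟩ := (lt_isLUB_iff (isLUB_range_mul_natCast K)).1 hγ
  have hblock : ∀ x ∈ Ico (K * n) (K * n + (K + 1)), γ < x ∧ x < K * ω := by
    refine fun x hx => ⟨hγn.trans_le hx.1, ?_⟩
    calc x ≤ K * n + K := Order.lt_add_one_iff.1 (add_assoc (K * n) K 1 ▸ hx.2)
      _ = K * (n + 1 : ℕ) := by push_cast; rw [mul_add_one]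
      _ < K * ω := (isNormal_mul_right hK).strictMono (natCast_lt_omega0 _)
  rcases h.exists_homog_Ico c (K * n) with ⟨X, hXI, hX, hXred⟩ | ⟨H, hHI, hHcard, hHblue⟩
  · exact .inl ⟨X, fun x hx => (hblock x (hXI hx)).2.trans hμ, hX, hXred⟩
  have hHμ : ∀ x ∈ H, x < K * ω := fun x hx => (hblock x (hHI hx)).2
  refine .inr ⟨insert (K * ω) H, ?_, ?_, ?_⟩
  · rw [Finset.coe_insert]
    exact insert_subset hμ fun x hx => (hHμ x hx).trans hμ
  · rw [Finset.card_insert_of_notMem fun hH => lt_irrefl _ (hHμ _ hH), hHcard]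
  · rw [Finset.coe_insert]
    exact hHblue.insert fun x hx => ⟨hHμ x hx, hblue x (hblock x (hHI hx)).1 (hHμ x hx)⟩

theorem ToClosed2.mul_omega0_add_one {K : Ordinal} (hK : 0 < K) {m : ℕ}
    (h : ToClosed2 (K + 1) (ω + 1 : Ordinal.{v}) m) :
    ToClosed2 (K * ω + 1) (ω + 1 : Ordinal.{v}) (m + 1) := by
  intro c
  by_cases hblue : ∃ γ < K * ω, ∀ x, γ < x → x < K * ω → c x (K * ω) = false
  · obtain ⟨γ, hγ, hblue⟩ := hblue
    exact h.redClosedCopy_or_blueSet_of_blue_tail hK hγ hblue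
  have hred : ∀ γ < K * ω, ∃ x, γ < x ∧ x < K * ω ∧ x ∈ {x | c x (K * ω) = true} := by
    simpa using hblue
  have hKn : ∀ n : ℕ, K * n < K * ω := fun n =>
    (isNormal_mul_right hK).strictMono (natCast_lt_omega0 n)
  obtain ⟨x, hx, hxred, hxμ⟩ := exists_strictMono_mem_isLUB (isLUB_range_mul_natCast K) hKn hred
  exact redClosedCopy_or_blueSet_of_isLUB hx hxμ (Order.lt_add_one_iff.2 le_rfl)
    (fun n => (hxred n).1) (m + 1)

theorem stmt0_general (k : ℕ) :
    ToClosed2 ((ω : Ordinal) ^ (k : Ordinal) + 1) (ω + 1) (k + 1) := by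
  induction k with
  | zero =>
    refine fun c => .inr ⟨{0}, by simp, Finset.card_singleton 0, ?_⟩
    simp [Homog]
  | succ k ih =>
    rw [Nat.cast_succ, opow_add_one]
    exact ih.mul_omega0_add_one (opow_pos _ omega0_pos)

/-- `ω^k + 1 →_cl (ω+1, k+1)²`. -/
theorem stmt0 (k : ℕ) (hk : 0 < k) :
    ToClosed2 ((ω : Ordinal) ^ (k : Ordinal) + 1) (ω + 1) (k + 1) :=
  stmt0_general k

end
end

section
/- For every positive integer k, ω^k does not satisfy the topological pigeonhole relation for k copies of ω+1: there is a coloring c : ω^k → k such that no color class contains a subspace homeomorphic to ω+1. In particular, coloring each x ∈ ω^k by its Cantor–Bendixson rank gives discrete color classes. -/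
/-!
Colour `x < ω ^ k` by its Cantor–Bendixson rank `n`. Then `x = ω ^ n * q` with `q` zero or a
successor `p + 1`, and such a point is isolated among the multiples of `ω ^ n`: the interval
`(ω ^ n * p, x]` contains no other one. So every colour class is discrete, whereas `ω + 1` is
compact and infinite, hence not discrete.
-/

open Ordinal Set

noncomputable section

open Order

namespace Ordinal

theorem exists_isOpen_inter_setOf_dvd_eq_singleton {a q : Ordinal} (ha : a ≠ 0)
    (hq : ¬ IsSuccLimit q) : ∃ U : Set Ordinal, IsOpen U ∧ U ∩ {y | a ∣ y} = {a * q} := by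
  rcases zero_or_succ_or_isSuccLimit q with rfl | ⟨p, rfl⟩ | hlim
  · refine ⟨{0}, SuccOrder.isOpen_singleton_iff.2 not_isSuccLimit_zero, ?_⟩
    simp
  · have ha' : 0 < a := pos_iff_ne_zero.2 ha
    refine ⟨Ioo (a * p) (a * succ p + 1), isOpen_Ioo, ?_⟩
    ext y
    simp only [mem_inter_iff, mem_Ioo, mem_ofPred_eq, mem_singleton_iff, lt_add_one_iff]
    constructor
    · rintro ⟨⟨hpy, hyq⟩, r, rfl⟩
      rw [mul_lt_mul_iff_of_pos_left ha'] at hpy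
      rw [mul_le_mul_iff_of_pos_left ha'] at hyq
      rw [le_antisymm hyq (succ_le_of_lt hpy)]
    · rintro rfl
      exact ⟨⟨mul_lt_mul_of_pos_left (lt_succ p) ha', le_rfl⟩, dvd_mul_right a _⟩
  · exact absurd hlim hq

theorem discreteTopology_image_mul_setOf_not_isSuccLimit {a : Ordinal} (ha : a ≠ 0) :
    DiscreteTopology ((a * ·) '' {q | ¬ IsSuccLimit q}) := by
  refine discreteTopology_subtype_iff'.2 ?_
  rintro _ ⟨q, hq, rfl⟩
  obtain ⟨U, hU, hUa⟩ := exists_isOpen_inter_setOf_dvd_eq_singleton ha hq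
  refine ⟨U, hU, subset_antisymm ?_ ?_⟩
  · rintro _ ⟨hy, r, -, rfl⟩
    exact hUa ▸ ⟨hy, dvd_mul_right a r⟩
  · rintro _ rfl
    exact ⟨(hUa.symm.subset rfl).1, q, hq, rfl⟩

theorem not_isTopCopy_omega0_add_one (X : Set Ordinal) [DiscreteTopology X] :
    ¬ IsTopCopy X (ω + 1) := by
  rintro ⟨e⟩
  have : DiscreteTopology (Iio (ω + 1 : Ordinal)) := e.discreteTopology
  have : CompactSpace (Iio (ω + 1 : Ordinal)) := by
    rw [← isCompact_iff_compactSpace, Set.Iio_add_one_eq_Iic, ← Set.Icc_bot]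
    exact isCompact_Icc
  have : Infinite (Iio (ω + 1 : Ordinal)) :=
    Infinite.of_injective (fun n : ℕ => ⟨n, (natCast_lt_omega0 n).trans (lt_add_one _)⟩)
      fun m n h => by simpa using congrArg Subtype.val h
  have : Finite (Iio (ω + 1 : Ordinal)) := finite_of_compact_of_discrete
  exact _root_.not_finite (Iio (ω + 1 : Ordinal))

open Classical in
/-- The largest `n ≤ m` with `ω ^ n ∣ x`. For `0 < x < ω ^ (m + 1)` this is the Cantor–Bendixson
rank of `x`, the last exponent of its Cantor normal form. -/
def cbRank (m : ℕ) (x : Ordinal) : ℕ :=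
  Nat.findGreatest (fun n => ω ^ (n : Ordinal) ∣ x) m

theorem cbRank_le (m : ℕ) (x : Ordinal) : cbRank m x ≤ m := by
  classical
  exact Nat.findGreatest_le m

theorem mem_image_opow_cbRank_mul_setOf_not_isSuccLimit {x : Ordinal} {m : ℕ}
    (hx : x < ω ^ ((m + 1 : ℕ) : Ordinal)) :
    x ∈ (ω ^ (cbRank m x : Ordinal) * ·) '' {q | ¬ IsSuccLimit q} := by
  classical
  obtain ⟨q, hxq⟩ : ω ^ (cbRank m x : Ordinal) ∣ x :=
    Nat.findGreatest_spec (P := fun n => ω ^ (n : Ordinal) ∣ x) (Nat.zero_le m) (by simp)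
  refine ⟨q, fun hq => ?_, hxq.symm⟩
  have hx0 : x ≠ 0 := hxq ▸ mul_ne_zero (opow_ne_zero _ omega0_ne_zero) hq.ne_bot
  obtain ⟨r, rfl⟩ := isSuccPrelimit_iff_omega0_dvd.1 hq.isSuccPrelimit
  have hdvd : ω ^ ((cbRank m x + 1 : ℕ) : Ordinal) ∣ x :=
    ⟨r, hxq.trans (by rw [Nat.cast_succ, opow_add, opow_one, mul_assoc])⟩
  rcases (cbRank_le m x).lt_or_eq with hlt | heq
  · exact Nat.findGreatest_is_greatest (Nat.lt_succ_self _) hlt hdvd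
  · exact (le_of_dvd hx0 (heq ▸ hdvd)).not_gt hx

end Ordinal

/-- `ω^k` does not satisfy the topological pigeonhole relation for
`k` copies of `ω+1`: there is a `k`-coloring of `ω^k` no color class of which
contains a subspace homeomorphic to `ω+1`. -/
theorem stmt1 (k : ℕ) (hk : 0 < k) :
    ∃ c : Ordinal → Fin k, ∀ i : Fin k,
      ¬ ∃ X ⊆ Iio ((ω : Ordinal) ^ (k : Ordinal)),
        (∀ x ∈ X, c x = i) ∧ IsTopCopy X (ω + 1) := by
  obtain ⟨m, rfl⟩ := Nat.exists_eq_succ_of_ne_zero hk.ne'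
  refine ⟨fun x => ⟨Ordinal.cbRank m x, Nat.lt_succ_of_le (Ordinal.cbRank_le m x)⟩, ?_⟩
  rintro i ⟨X, hX, hXi, hXcopy⟩
  have hXsub : X ⊆ (ω ^ (i : Ordinal) * ·) '' {q | ¬ IsSuccLimit q} := fun x hx => by
    simpa [← hXi x hx] using Ordinal.mem_image_opow_cbRank_mul_setOf_not_isSuccLimit (hX hx)
  have := (Ordinal.discreteTopology_image_mul_setOf_not_isSuccLimit
    (opow_ne_zero _ omega0_ne_zero)).of_subset hXsub
  exact Ordinal.not_isTopCopy_omega0_add_one X hXcopy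

end
end

section
/- For every positive integer k, ω^k + 1 →_top (ω+1)¹_k: for every coloring c : ω^k + 1 → k, some color class contains a subspace homeomorphic to ω+1 (equivalently, a set of order type ω+1 closed in its supremum). -/
open Ordinal Set

noncomputable section

/-!
Induct on `k`, colouring `(γ, γ + ω ^ k]` with at most `k` colours. Let `t = γ + ω ^ (k + 1)` be
the top point and `i` its colour. If colour `i` is cofinal below `t`, then, since `t` is the limit
of the sequence `γ + ω ^ k * n`, it contains a strictly increasing sequence with supremum `t`;
together with `t` this is a copy of `ω + 1`, because a strictly increasing sequence with its
supremum is the continuous injective image of the compact space `ω + 1`. Otherwise colour `i`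
misses a final segment of `(γ, t]`, which contains a block `(δ, δ + ω ^ k]` coloured with at most
`k` colours, and the induction hypothesis applies. For `k = 0` there are no colours at all.
-/

open Topology

-- `o.card.toNat` recovers `n` from `o = n`.
def extendOmega (f : ℕ → Ordinal) (o : Ordinal) : Ordinal :=
  if o < ω then f o.card.toNat else ⨆ n, f n

section ExtendOmega

variable {f : ℕ → Ordinal}

@[simp]
lemma extendOmega_natCast (f : ℕ → Ordinal) (n : ℕ) : extendOmega f n = f n := by
  simp [extendOmega, natCast_lt_omega0]

@[simp]
lemma extendOmega_omega0 (f : ℕ → Ordinal) : extendOmega f ω = ⨆ n, f n := by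
  simp [extendOmega]

lemma StrictMono.lt_iSup (hf : StrictMono f) (n : ℕ) : f n < ⨆ n, f n :=
  (hf n.lt_succ_self).trans_le (Ordinal.le_iSup f _)

lemma StrictMono.strictMonoOn_extendOmega (hf : StrictMono f) :
    StrictMonoOn (extendOmega f) (Iic ω) := by
  intro x hx y (hy : y ≤ ω) hxy
  obtain ⟨m, rfl⟩ := lt_omega0.1 (hxy.trans_le hy)
  rcases hy.lt_or_eq with hy | rfl
  · obtain ⟨n, rfl⟩ := lt_omega0.1 hy
    simpa using hf (by exact_mod_cast hxy)
  · simpa using hf.lt_iSup m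

lemma StrictMono.continuousOn_extendOmega (hf : StrictMono f) :
    ContinuousOn (extendOmega f) (Iic ω) := by
  intro x (hx : x ≤ ω)
  rcases hx.lt_or_eq with hx | rfl
  · have : 𝓝 x = pure x :=
      SuccOrder.nhds_eq_pure.2 fun hlim => (omega0_le_of_isSuccLimit hlim).not_gt hx
    exact (show ContinuousAt _ x by rw [ContinuousAt, this]; exact tendsto_pure_nhds _ x)
      |>.continuousWithinAt
  · refine hf.strictMonoOn_extendOmega.continuousWithinAt_left_of_exists_between
      self_mem_nhdsWithin fun b hb => ?_
    rw [extendOmega_omega0, Ordinal.lt_iSup_iff] at hb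
    obtain ⟨n, hn⟩ := hb
    refine ⟨n, (natCast_lt_omega0 n).le, ?_⟩
    rw [extendOmega_natCast, extendOmega_omega0]
    exact ⟨hn.le, hf.lt_iSup n⟩

lemma extendOmega_image_Iic_omega0 (f : ℕ → Ordinal) :
    extendOmega f '' Iic ω = insert (⨆ n, f n) (range f) := by
  ext y
  constructor
  · rintro ⟨x, (hx : x ≤ ω), rfl⟩
    rcases hx.lt_or_eq with hx | rfl
    · obtain ⟨n, rfl⟩ := lt_omega0.1 hx
      simp
    · simp
  · rintro (rfl | ⟨n, rfl⟩)
    · exact ⟨ω, mem_Iic.2 le_rfl, extendOmega_omega0 f⟩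
    · exact ⟨n, (natCast_lt_omega0 n).le, extendOmega_natCast f n⟩

end ExtendOmega

lemma StrictMono.isTopCopy_insert_iSup {f : ℕ → Ordinal} (hf : StrictMono f) :
    IsTopCopy (insert (⨆ n, f n) (range f)) (ω + 1) := by
  have : CompactSpace (Iic ω) :=
    isCompact_iff_compactSpace.1 (by rw [← Icc_bot]; exact isCompact_Icc)
  have hemb : IsEmbedding ((Iic ω).domRestrict (extendOmega f)) :=
    (hf.continuousOn_extendOmega.domRestrict.isClosedEmbedding
      hf.strictMonoOn_extendOmega.injOn.injective).isEmbedding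
  have hrange : insert (⨆ n, f n) (range f) = range ((Iic ω).domRestrict (extendOmega f)) := by
    rw [range_domRestrict, extendOmega_image_Iic_omega0]
  have hIio : Iic ω = Iio (ω + 1) := by rw [← Order.succ_eq_add_one, Order.Iio_succ]
  exact ⟨((Homeomorph.setCongr hrange).trans hemb.toHomeomorph.symm).trans
    (Homeomorph.setCongr hIio)⟩

lemma add_mul_natCast_lt_add_mul_omega0 (γ : Ordinal) {a : Ordinal} (ha : 0 < a) (n : ℕ) :
    γ + a * n < γ + a * ω :=
  (add_lt_add_iff_left γ).2 ((mul_lt_mul_iff_right₀ ha).2 (natCast_lt_omega0 n))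

lemma exists_lt_add_mul_natCast {γ a x : Ordinal} (hx : x < γ + a * ω) :
    ∃ n : ℕ, x < γ + a * n := by
  rcases lt_or_ge x γ with hxγ | hγx
  · exact ⟨1, hxγ.trans_le le_self_add⟩
  · rw [← Ordinal.add_sub_cancel_of_le hγx, add_lt_add_iff_left] at hx
    obtain ⟨e, he, hxe⟩ := (lt_mul_iff_of_isSuccLimit isSuccLimit_omega0).1 hx
    obtain ⟨n, rfl⟩ := lt_omega0.1 he
    exact ⟨n, by rwa [← Ordinal.add_sub_cancel_of_le hγx, add_lt_add_iff_left]⟩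

lemma exists_strictMono_iSup_eq_of_cofinal {t : Ordinal} {A : Set Ordinal} {b : ℕ → Ordinal}
    (hb : ∀ n, b n < t) (hbt : ∀ x < t, ∃ n, x < b n)
    (hA : ∀ β < t, ∃ x ∈ A, β < x ∧ x < t) :
    ∃ f : ℕ → Ordinal, StrictMono f ∧ range f ⊆ A ∧ ⨆ n, f n = t := by
  choose! next hnextA hlt hnext using hA
  let f : ℕ → Ordinal := fun n => Nat.rec (next (b 0)) (fun n x => next (max x (b (n + 1)))) n
  have hft : ∀ n, f n < t := by
    intro n
    induction n with
    | zero => exact hnext _ (hb 0)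
    | succ n ih => exact hnext _ (max_lt ih (hb _))
  have hmax : ∀ n, max (f n) (b (n + 1)) < f (n + 1) := fun n => hlt _ (max_lt (hft n) (hb _))
  have hbf : ∀ n, b n < f n := by
    rintro (_ | n)
    · exact hlt _ (hb 0)
    · exact (le_max_right _ _).trans_lt (hmax n)
  refine ⟨f, strictMono_nat_of_lt_succ fun n => (le_max_left _ _).trans_lt (hmax n), ?_, ?_⟩
  · rintro _ ⟨(_ | n), rfl⟩
    · exact hnextA _ (hb 0)
    · exact hnextA _ (max_lt (hft n) (hb _))
  · refine (Ordinal.iSup_le fun n => (hft n).le).antisymm (not_lt.1 fun hlt => ?_)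
    obtain ⟨n, hn⟩ := hbt _ hlt
    exact (hn.trans (hbf n)).not_ge (Ordinal.le_iSup f n)

lemma exists_isTopCopy_subset_of_cofinal {t : Ordinal} {A : Set Ordinal} {b : ℕ → Ordinal}
    (hb : ∀ n, b n < t) (hbt : ∀ x < t, ∃ n, x < b n)
    (hA : ∀ β < t, ∃ x ∈ A, β < x ∧ x < t) :
    ∃ X ⊆ insert t (A ∩ Iio t), IsTopCopy X (ω + 1) := by
  obtain ⟨f, hf, hfA, rfl⟩ := exists_strictMono_iSup_eq_of_cofinal hb hbt hA
  refine ⟨_, insert_subset_insert ?_, hf.isTopCopy_insert_iSup⟩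
  rintro _ ⟨n, rfl⟩
  exact ⟨hfA ⟨n, rfl⟩, hf.lt_iSup n⟩

theorem exists_monochromatic_isTopCopy_Ioc {α : Type*} (c : Ordinal → α) {k : ℕ} {S : Finset α}
    {γ : Ordinal} (hS : S.card ≤ k) (hc : MapsTo c (Ioc γ (γ + ω ^ (k : Ordinal))) S) :
    ∃ i, ∃ X ⊆ Ioc γ (γ + ω ^ (k : Ordinal)), (∀ x ∈ X, c x = i) ∧ IsTopCopy X (ω + 1) := by
  classical
  induction k generalizing S γ with
  | zero =>
    obtain rfl : S = ∅ := Finset.card_eq_zero.1 (Nat.le_zero.1 hS)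
    exact absurd (hc (show γ + 1 ∈ Ioc γ (γ + ω ^ ((0 : ℕ) : Ordinal)) by simp)) (by simp)
  | succ k ih =>
    set a := ω ^ (k : Ordinal)
    have ha : 0 < a := opow_pos _ omega0_pos
    rw [Nat.cast_succ, ← Order.succ_eq_add_one, opow_succ] at hc ⊢
    set t := γ + a * ω
    have hγt : γ < t := le_self_add.trans_lt (add_mul_natCast_lt_add_mul_omega0 γ ha 0)
    by_cases hcof : ∀ β < t, ∃ x ∈ {x | γ < x ∧ c x = c t}, β < x ∧ x < t
    · obtain ⟨X, hX, hXtop⟩ := exists_isTopCopy_subset_of_cofinal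
        (add_mul_natCast_lt_add_mul_omega0 γ ha) (fun _ => exists_lt_add_mul_natCast) hcof
      refine ⟨c t, X, fun x hx => ?_, fun x hx => ?_, hXtop⟩
      · rcases hX hx with rfl | ⟨⟨hγx, -⟩, hxt⟩
        exacts [⟨hγt, le_rfl⟩, ⟨hγx, hxt.le⟩]
      · rcases hX hx with rfl | ⟨⟨-, hxc⟩, -⟩
        exacts [rfl, hxc]
    · push Not at hcof
      obtain ⟨β, hβt, hβ⟩ := hcof
      obtain ⟨n, hn⟩ := exists_lt_add_mul_natCast (max_lt hβt hγt)
      set δ := γ + a * n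
      have hδt : δ + a < t := by
        rw [add_assoc, ← mul_add_one, ← Nat.cast_succ]
        exact add_mul_natCast_lt_add_mul_omega0 γ ha (n + 1)
      have hsub : Ioc δ (δ + a) ⊆ Ioc γ t := Ioc_subset_Ioc le_self_add hδt.le
      have hcard : (S.erase (c t)).card ≤ k := by
        rw [Finset.card_erase_of_mem (hc ⟨hγt, le_rfl⟩)]
        omega
      have hmaps : MapsTo c (Ioc δ (δ + a)) (S.erase (c t)) := by
        intro x hx
        refine Finset.mem_erase.2 ⟨fun hxt => ?_, hc (hsub hx)⟩
        have hlt : max β γ < x := hn.trans hx.1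
        exact (hβ x ⟨(le_max_right _ _).trans_lt hlt, hxt⟩ ((le_max_left _ _).trans_lt hlt)).not_gt
          (hx.2.trans_lt hδt)
      obtain ⟨j, X, hX, hXj, hXtop⟩ := ih hcard hmaps
      exact ⟨j, X, hX.trans hsub, hXj, hXtop⟩

theorem stmt2_general (k : ℕ) :
    ToTop1 ((ω : Ordinal) ^ (k : Ordinal) + 1) (ω + 1) k := by
  intro c
  obtain ⟨i, X, hX, hXi, hXtop⟩ :=
    exists_monochromatic_isTopCopy_Ioc c (γ := 0) (Finset.card_fin k).le
      fun x _ => Finset.mem_univ _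
  refine ⟨i, X, fun x hx => ?_, hXi, hXtop⟩
  rw [zero_add] at hX
  exact Order.lt_add_one_iff.2 (hX hx).2

/-- `ω^k + 1 →_top (ω+1)¹_k`. -/
theorem stmt2 (k : ℕ) (hk : 0 < k) :
    ToTop1 ((ω : Ordinal) ^ (k : Ordinal) + 1) (ω + 1) k :=
  stmt2_general k

end
end

section
/- Let k be a positive integer, let X be a perfect ℵ₀-tree of height k (every non-leaf has ℵ₀ immediate successors and every leaf has exactly k predecessors), and let c be a 2-coloring of the leaves of X. Then there exists a full subtree Y of X (a subset that is itself a perfect ℵ₀-tree of height k under the induced order) such that all leaves of Y receive the same color. -/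
open Ordinal Set

noncomputable section

/-- Predecessors of `x` in the subtree `S` with respect to the strict relation `r`. -/
def TreePred {α : Type*} (r : α → α → Prop) (S : Set α) (x : α) : Set α := {y ∈ S | r y x}

/-- `y` is an immediate successor of `x` within `S`. -/
def TreeCov {α : Type*} (r : α → α → Prop) (S : Set α) (x y : α) : Prop :=
  x ∈ S ∧ y ∈ S ∧ r x y ∧ ¬ ∃ z ∈ S, r x z ∧ r z y

/-- `x` is a leaf of `S`: it belongs to `S` and has no immediate successors in `S`. -/
def TreeLeaf {α : Type*} (r : α → α → Prop) (S : Set α) (x : α) : Prop :=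
  x ∈ S ∧ ¬ ∃ y, TreeCov r S x y

/-- `S` is a perfect ℵ₀-tree of height `k` under the strict relation `r`:
it is single-rooted, predecessor sets are finite and linearly ordered,
every non-leaf has countably infinitely many immediate successors,
and every leaf has exactly `k` predecessors. -/
def IsPerfectTree {α : Type*} (r : α → α → Prop) (S : Set α) (k : ℕ) : Prop :=
  (∃ root ∈ S, ∀ x ∈ S, x = root ∨ r root x) ∧
  (∀ x ∈ S, (TreePred r S x).Finite ∧
    ∀ y ∈ TreePred r S x, ∀ z ∈ TreePred r S x, y = z ∨ r y z ∨ r z y) ∧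
  (∀ x ∈ S, ¬ TreeLeaf r S x →
    {y | TreeCov r S x y}.Countable ∧ {y | TreeCov r S x y}.Infinite) ∧
  (∀ x ∈ S, TreeLeaf r S x → (TreePred r S x).ncard = k)

/-!
Induction on the height. Above each immediate successor `y` of the root sits a perfect tree
of height `k`, which by induction contains a monochromatic full subtree `F y`. Since the root
has infinitely many immediate successors and there are finitely many colours, infinitely many
of the `F y` share a colour; together with the root they form the required full subtree.
-/

section Subset

variable {α : Type*} {r : α → α → Prop}

lemma treePred_mono {S S' : Set α} (h : S ⊆ S') (x : α) :
    TreePred r S x ⊆ TreePred r S' x :=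
  fun _ hy => ⟨h hy.1, hy.2⟩

lemma treeCov_iff_of_subset {S S' : Set α} (h : S ⊆ S') {x : α} (hx : x ∈ S)
    (hup : ∀ z ∈ S', r x z → z ∈ S) (z : α) : TreeCov r S x z ↔ TreeCov r S' x z :=
  ⟨fun ⟨_, hz, hxz, hno⟩ => ⟨h hx, h hz, hxz, fun ⟨w, hw, hxw, hwz⟩ =>
      hno ⟨w, hup w hw hxw, hxw, hwz⟩⟩,
    fun ⟨_, hz, hxz, hno⟩ => ⟨hx, hup z hz hxz, hxz, fun ⟨w, hw, hxw, hwz⟩ =>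
      hno ⟨w, h hw, hxw, hwz⟩⟩⟩

lemma treeLeaf_iff_of_subset {S S' : Set α} (h : S ⊆ S') {x : α} (hx : x ∈ S)
    (hup : ∀ z ∈ S', r x z → z ∈ S) : TreeLeaf r S x ↔ TreeLeaf r S' x :=
  and_congr (iff_of_true hx (h hx)) (not_congr (exists_congr (treeCov_iff_of_subset h hx hup)))

end Subset

section Root

variable {T : Type*} [PartialOrder T] {S : Set T} {k : ℕ} {r x y z : T}

lemma IsPerfectTree.exists_isLeast (hS : IsPerfectTree (· < ·) S k) : ∃ r, IsLeast S r := by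
  obtain ⟨r, hr, hroot⟩ := hS.1
  exact ⟨r, hr, fun x hx => (hroot x hx).elim (fun h => h.ge) le_of_lt⟩

lemma treePred_eq_empty_of_isLeast (hr : IsLeast S r) : TreePred (· < ·) S r = ∅ :=
  eq_empty_iff_forall_notMem.2 fun _ hw => (hr.2 hw.1).not_gt hw.2

lemma IsPerfectTree.eq_of_treeLeaf_of_height_zero (hS : IsPerfectTree (· < ·) S 0)
    (hr : IsLeast S r) (hx : TreeLeaf (· < ·) S x) : x = r := by
  have hpred : TreePred (· < ·) S x = ∅ :=
    (ncard_eq_zero (hS.2.1 x hx.1).1).1 (hS.2.2.2 x hx.1 hx)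
  by_contra hne
  exact (eq_empty_iff_forall_notMem.1 hpred) r ⟨hr.1, (hr.2 hx.1).lt_of_ne' hne⟩

lemma IsPerfectTree.not_treeLeaf_of_isLeast (hS : IsPerfectTree (· < ·) S (k + 1))
    (hr : IsLeast S r) : ¬ TreeLeaf (· < ·) S r := fun hl => by
  simpa [treePred_eq_empty_of_isLeast hr] using hS.2.2.2 r hr.1 hl

lemma IsPerfectTree.le_total_of_le (hS : IsPerfectTree (· < ·) S k) (hx : x ∈ S) (hy : y ∈ S)
    (hz : z ∈ S) (hxz : x ≤ z) (hyz : y ≤ z) : x ≤ y ∨ y ≤ x := by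
  rcases hxz.lt_or_eq with hxz | rfl
  · rcases hyz.lt_or_eq with hyz | rfl
    · rcases (hS.2.1 z hz).2 x ⟨hx, hxz⟩ y ⟨hy, hyz⟩ with h | h | h
      exacts [Or.inl h.le, Or.inl h.le, Or.inr h.le]
    · exact Or.inl hxz.le
  · exact Or.inr hyz

lemma eq_of_lt_of_treeCov (hr : IsLeast S r) (hy : TreeCov (· < ·) S r y) (hx : x ∈ S)
    (hxy : x < y) : x = r := by
  by_contra hne
  exact hy.2.2.2 ⟨x, hx, (hr.2 hx).lt_of_ne' hne, hxy⟩

lemma IsPerfectTree.eq_of_treeCov_of_le (hS : IsPerfectTree (· < ·) S k) (hr : IsLeast S r)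
    {y' : T} (hy : TreeCov (· < ·) S r y) (hy' : TreeCov (· < ·) S r y') (hz : z ∈ S)
    (hyz : y ≤ z) (hy'z : y' ≤ z) : y = y' := by
  have below_child {u v : T} (hu : TreeCov (· < ·) S r u) (hv : TreeCov (· < ·) S r v)
      (huv : u ≤ v) : u = v := by
    refine huv.eq_or_lt.resolve_right fun hlt => hu.2.2.1.ne' ?_
    exact eq_of_lt_of_treeCov hr hv hu.2.1 hlt
  rcases hS.le_total_of_le hy.2.1 hy'.2.1 hz hyz hy'z with h | h
  exacts [below_child hy hy' h, (below_child hy' hy h).symm]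

lemma IsPerfectTree.treePred_eq_insert (hS : IsPerfectTree (· < ·) S k) (hr : IsLeast S r)
    (hy : TreeCov (· < ·) S r y) (hx : x ∈ S) (hyx : y ≤ x) :
    TreePred (· < ·) S x = insert r (TreePred (· < ·) (S ∩ Ici y) x) := by
  ext w
  refine ⟨fun ⟨hw, hwx⟩ => ?_, ?_⟩
  · by_cases hyw : y ≤ w
    · exact Or.inr ⟨⟨hw, hyw⟩, hwx⟩
    · have hwy : w < y :=
        ((hS.le_total_of_le hw hy.2.1 hx hwx.le hyx).resolve_right hyw).lt_of_ne
          fun h => hyw h.ge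
      exact Or.inl (eq_of_lt_of_treeCov hr hy hw hwy)
  · rintro (rfl | ⟨⟨hw, -⟩, hwx⟩)
    exacts [⟨hr.1, hy.2.2.1.trans_le hyx⟩, ⟨hw, hwx⟩]

lemma IsPerfectTree.inter_Ici (hS : IsPerfectTree (· < ·) S (k + 1)) (hr : IsLeast S r)
    (hy : TreeCov (· < ·) S r y) : IsPerfectTree (· < ·) (S ∩ Ici y) k := by
  have hsub : S ∩ Ici y ⊆ S := inter_subset_left
  have hup : ∀ x ∈ S ∩ Ici y, ∀ z ∈ S, x < z → z ∈ S ∩ Ici y :=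
    fun x hx z hz hxz => ⟨hz, hx.2.trans hxz.le⟩
  refine ⟨⟨y, ⟨hy.2.1, le_rfl⟩, fun x hx => hx.2.eq_or_lt.imp_left Eq.symm⟩,
    fun x hx => ⟨(hS.2.1 x hx.1).1.subset (treePred_mono hsub x), fun a ha b hb =>
      (hS.2.1 x hx.1).2 a (treePred_mono hsub x ha) b (treePred_mono hsub x hb)⟩,
    fun x hx hnl => ?_, fun x hx hl => ?_⟩
  · rw [show {z | TreeCov (· < ·) (S ∩ Ici y) x z} = {z | TreeCov (· < ·) S x z} from
      Set.ext (treeCov_iff_of_subset hsub hx (hup x hx))]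
    exact hS.2.2.1 x hx.1 (mt (treeLeaf_iff_of_subset hsub hx (hup x hx)).2 hnl)
  · have hr' : r ∉ TreePred (· < ·) (S ∩ Ici y) x := fun h => hy.2.2.1.not_ge h.1.2
    have hcard := hS.2.2.2 x hx.1 ((treeLeaf_iff_of_subset hsub hx (hup x hx)).1 hl)
    rw [hS.treePred_eq_insert hr hy hx.1 hx.2, ncard_insert_of_notMem hr'
      ((hS.2.1 x hx.1).1.subset (treePred_mono hsub x))] at hcard
    exact Nat.succ_injective hcard

end Root

section Graft

variable {T : Type*} [PartialOrder T] {ι : Type*} {F : ι → Set T} {r : T} {k : ℕ}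

lemma isLeast_insert_iUnion (hrF : ∀ i, ∀ x ∈ F i, r < x) : IsLeast (insert r (⋃ i, F i)) r := by
  refine ⟨mem_insert r _, fun x hx => ?_⟩
  rcases hx with rfl | hx
  · exact le_rfl
  · obtain ⟨i, hx⟩ := mem_iUnion.1 hx
    exact (hrF i x hx).le

variable (hrF : ∀ i, ∀ x ∈ F i, r < x) (hsep : ∀ i j, ∀ x ∈ F i, ∀ z ∈ F j, x ≤ z → i = j)
include hrF hsep

lemma mem_of_lt_of_mem_insert_iUnion {i : ι} {x z : T} (hx : x ∈ F i)
    (hz : z ∈ insert r (⋃ j, F j)) (hxz : x < z) : z ∈ F i := by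
  rcases hz with rfl | hz
  · exact absurd ((hrF i x hx).trans hxz) (lt_irrefl z)
  · obtain ⟨j, hz⟩ := mem_iUnion.1 hz
    exact hsep i j x hx z hz hxz.le ▸ hz

lemma treePred_insert_iUnion {i : ι} {x : T} (hx : x ∈ F i) :
    TreePred (· < ·) (insert r (⋃ j, F j)) x = insert r (TreePred (· < ·) (F i) x) := by
  ext w
  refine ⟨fun ⟨hw, hwx⟩ => ?_, ?_⟩
  · rcases hw with rfl | hw
    · exact Or.inl rfl
    · obtain ⟨j, hw⟩ := mem_iUnion.1 hw
      exact Or.inr ⟨hsep j i w hw x hx hwx.le ▸ hw, hwx⟩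
  · rintro (rfl | ⟨hw, hwx⟩)
    exacts [⟨mem_insert _ _, hrF i x hx⟩, ⟨mem_insert_of_mem _ (mem_iUnion_of_mem i hw), hwx⟩]

lemma treeCov_insert_iUnion_iff {i : ι} {x : T} (hx : x ∈ F i) (z : T) :
    TreeCov (· < ·) (insert r (⋃ j, F j)) x z ↔ TreeCov (· < ·) (F i) x z :=
  (treeCov_iff_of_subset ((subset_iUnion F i).trans (subset_insert _ _)) hx
    (fun _ hz hxz => mem_of_lt_of_mem_insert_iUnion hrF hsep hx hz hxz) z).symm

lemma treeLeaf_insert_iUnion_iff {i : ι} {x : T} (hx : x ∈ F i) :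
    TreeLeaf (· < ·) (insert r (⋃ j, F j)) x ↔ TreeLeaf (· < ·) (F i) x :=
  (treeLeaf_iff_of_subset ((subset_iUnion F i).trans (subset_insert _ _)) hx
    fun _ hz hxz => mem_of_lt_of_mem_insert_iUnion hrF hsep hx hz hxz).symm

lemma treeCov_insert_iUnion_root_iff {ρ : ι → T} (hρ : ∀ i, IsLeast (F i) (ρ i)) (z : T) :
    TreeCov (· < ·) (insert r (⋃ j, F j)) r z ↔ z ∈ range ρ := by
  refine ⟨fun ⟨_, hz, hrz, hno⟩ => ?_, ?_⟩
  · rcases hz with rfl | hz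
    · exact absurd hrz (lt_irrefl z)
    · obtain ⟨i, hz⟩ := mem_iUnion.1 hz
      refine ⟨i, ((hρ i).2 hz).eq_or_lt.resolve_right fun hlt => hno ?_⟩
      exact ⟨ρ i, mem_insert_of_mem _ (mem_iUnion_of_mem i (hρ i).1), hrF i _ (hρ i).1, hlt⟩
  · rintro ⟨i, rfl⟩
    refine ⟨mem_insert r _, mem_insert_of_mem _ (mem_iUnion_of_mem i (hρ i).1),
      hrF i _ (hρ i).1, fun ⟨w, hw, hrw, hwρ⟩ => ?_⟩
    rcases hw with rfl | hw
    · exact lt_irrefl w hrw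
    · obtain ⟨j, hw⟩ := mem_iUnion.1 hw
      obtain rfl := hsep j i w hw (ρ i) (hρ i).1 hwρ.le
      exact ((hρ j).2 hw).not_gt hwρ

lemma isPerfectTree_insert_iUnion [Countable ι] [Infinite ι]
    (hF : ∀ i, IsPerfectTree (· < ·) (F i) k) :
    IsPerfectTree (· < ·) (insert r (⋃ i, F i)) (k + 1) := by
  choose ρ hρ using fun i => (hF i).exists_isLeast
  have hr : IsLeast (insert r (⋃ i, F i)) r := isLeast_insert_iUnion hrF
  have hcov : {z | TreeCov (· < ·) (insert r (⋃ i, F i)) r z} = range ρ :=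
    Set.ext (treeCov_insert_iUnion_root_iff hrF hsep hρ)
  have hρ_inj : Function.Injective ρ := fun i j h => hsep i j _ (hρ i).1 _ (hρ j).1 h.le
  refine ⟨⟨r, hr.1, fun x hx => (hr.2 hx).eq_or_lt.imp_left Eq.symm⟩, ?_, ?_, ?_⟩
  · rintro x (rfl | hx)
    · simp [treePred_eq_empty_of_isLeast hr]
    obtain ⟨i, hx⟩ := mem_iUnion.1 hx
    obtain ⟨hfin, hlin⟩ := (hF i).2.1 x hx
    rw [treePred_insert_iUnion hrF hsep hx]
    refine ⟨hfin.insert r, ?_⟩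
    rintro a (rfl | ha) b (rfl | hb)
    exacts [Or.inl rfl, Or.inr (Or.inl (hrF i b hb.1)), Or.inr (Or.inr (hrF i a ha.1)),
      hlin a ha b hb]
  · rintro x (rfl | hx) hnl
    · rw [hcov]
      exact ⟨countable_range ρ, infinite_range_of_injective hρ_inj⟩
    obtain ⟨i, hx⟩ := mem_iUnion.1 hx
    rw [show {z | TreeCov (· < ·) (insert r (⋃ i, F i)) x z} = {z | TreeCov (· < ·) (F i) x z}
      from Set.ext (treeCov_insert_iUnion_iff hrF hsep hx)]
    exact (hF i).2.2.1 x hx (mt (treeLeaf_insert_iUnion_iff hrF hsep hx).2 hnl)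
  · rintro x (rfl | hx) hl
    · exact absurd (hcov ▸ mem_range_self (Classical.arbitrary ι)) fun h => hl.2 ⟨_, h⟩
    obtain ⟨i, hx⟩ := mem_iUnion.1 hx
    rw [treePred_insert_iUnion hrF hsep hx,
      ncard_insert_of_notMem (fun h => lt_irrefl r (hrF i r h.1)) ((hF i).2.1 x hx).1,
      (hF i).2.2.2 x hx ((treeLeaf_insert_iUnion_iff hrF hsep hx).1 hl)]

end Graft

theorem IsPerfectTree.exists_subset_monochromatic {T β : Type*} [PartialOrder T] [Finite β]
    {k : ℕ} {S : Set T} (hS : IsPerfectTree (· < ·) S k) (c : T → β) :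
    ∃ Y ⊆ S, IsPerfectTree (· < ·) Y k ∧ ∃ b, ∀ x, TreeLeaf (· < ·) Y x → c x = b := by
  induction k generalizing S with
  | zero =>
    obtain ⟨r, hr⟩ := hS.exists_isLeast
    exact ⟨S, subset_rfl, hS, c r,
      fun x hx => congrArg c (hS.eq_of_treeLeaf_of_height_zero hr hx)⟩
  | succ k ih =>
    obtain ⟨r, hr⟩ := hS.exists_isLeast
    set C := {y | TreeCov (· < ·) S r y}
    obtain ⟨hC_countable, hC_infinite⟩ := hS.2.2.1 r hr.1 (hS.not_treeLeaf_of_isLeast hr)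
    have : Countable C := hC_countable.to_subtype
    have : Infinite C := hC_infinite.to_subtype
    choose F hFS hF b hb using fun y : C => ih (hS.inter_Ici hr y.2)
    obtain ⟨b₀, hb₀⟩ := Finite.exists_infinite_fiber b
    let G (i : b ⁻¹' {b₀}) : Set T := F i
    have hrG : ∀ i, ∀ x ∈ G i, r < x := fun i _ hx => i.1.2.2.2.1.trans_le (hFS i hx).2
    have hsep : ∀ i j, ∀ x ∈ G i, ∀ z ∈ G j, x ≤ z → i = j := fun i j _ hx _ hz hxz =>
      Subtype.ext <| Subtype.ext <| hS.eq_of_treeCov_of_le hr i.1.2 j.1.2 (hFS j hz).1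
        ((hFS i hx).2.trans hxz) (hFS j hz).2
    have hY := isPerfectTree_insert_iUnion hrG hsep fun i => hF i
    refine ⟨insert r (⋃ i, G i),
      insert_subset hr.1 (iUnion_subset fun i => (hFS i).trans inter_subset_left), hY, b₀,
      fun x hx => ?_⟩
    rcases hx.1 with rfl | hx'
    · exact absurd hx (hY.not_treeLeaf_of_isLeast (isLeast_insert_iUnion hrG))
    obtain ⟨i, hxi⟩ := mem_iUnion.1 hx'
    exact (hb i x ((treeLeaf_insert_iUnion_iff hrG hsep hxi).1 hx)).trans i.2

theorem stmt5_general {T : Type*} [PartialOrder T] (k : ℕ)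
    (hT : IsPerfectTree (· < ·) (Set.univ : Set T) k) (c : T → Bool) :
    ∃ Y : Set T, IsPerfectTree (· < ·) Y k ∧
      ∃ b : Bool, ∀ x : T, TreeLeaf (· < ·) Y x → c x = b := by
  obtain ⟨Y, -, hY, b, hb⟩ := hT.exists_subset_monochromatic c
  exact ⟨Y, hY, b, hb⟩

/-- every 2-coloring of the leaves of a perfect ℵ₀-tree of height `k`
admits a full subtree all of whose leaves get the same color. -/
theorem stmt5 {T : Type*} [PartialOrder T] (k : ℕ) (hk : 0 < k)
    (hT : IsPerfectTree (· < ·) (Set.univ : Set T) k) (c : T → Bool) :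
    ∃ Y : Set T, IsPerfectTree (· < ·) Y k ∧
      ∃ b : Bool, ∀ x : T, TreeLeaf (· < ·) Y x → c x = b :=
  stmt5_general k hT c

end
end

section
/- If β is a nonzero countable ordinal and k is a positive integer, then ω^(ω^β) → (ω^(ω^β))¹_k for the closed relation: for every coloring c : ω^(ω^β) → k, some color class contains a subset of order type ω^(ω^β) that is closed in its supremum. Equivalently, P^cl(ω^(ω^β))_k = ω^(ω^β). -/
open Ordinal Set

noncomputable section

/-!
Rank the points of a set `S` of ordinals by the left Cantor–Bendixson derivatives of `S`.
Ranks are subadditive for the natural sum: if no point of `A` has rank `σ` and no point of `B`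
has rank `τ`, no point of `A ∪ B` has rank `σ ♯ τ`. Since `ω ^ β` is closed under `♯` and
`u + ω ^ δ` has rank `δ` in `(u, ω ^ ω ^ β)`, some colour class of a finite colouring of
`ω ^ ω ^ β` has, above every bound, points of every rank below `ω ^ β`.

Below a point `y` of rank `α > 0` and countable cofinality there is a closed copy of
`ω ^ α + 1` with top `y`: glue, along a sequence cofinal in `y`, closed copies of `ω ^ ζ + 1`
found below points of rank `ζ`, using every `ζ < α` infinitely often. The same gluing inside
the good colour class, with `ζ` running through `ω ^ β`, gives a closed copy of `ω ^ ω ^ β`.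
-/

open Cardinal

namespace Ordinal

/-! ### Natural sum -/

universe u

/-- Hessenberg's natural sum. -/
def nadd (a b : Ordinal.{u}) : Ordinal.{u} :=
  sInf {c | (∀ a' < a, nadd a' b < c) ∧ ∀ b' < b, nadd a b' < c}
termination_by (a, b)
decreasing_by
  · exact Prod.Lex.left _ _ ‹_›
  · exact Prod.Lex.right _ ‹_›

infixl:65 " ♯ " => nadd

theorem nadd_def (a b : Ordinal.{u}) :
    a ♯ b = sInf {c | (∀ a' < a, a' ♯ b < c) ∧ ∀ b' < b, a ♯ b' < c} := by
  rw [nadd]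

theorem lt_nadd (a b : Ordinal.{u}) :
    (∀ a' < a, a' ♯ b < a ♯ b) ∧ ∀ b' < b, a ♯ b' < a ♯ b := by
  obtain ⟨M, hM⟩ := bddAbove_of_small
    (s := (fun a' => a' ♯ b) '' Iio a ∪ (fun b' => a ♯ b') '' Iio b)
  rw [nadd_def a b]
  exact csInf_mem (s := {c | (∀ a' < a, a' ♯ b < c) ∧ ∀ b' < b, a ♯ b' < c})
    ⟨Order.succ M, fun a' ha' => Order.lt_succ_iff.2 (hM (Or.inl ⟨a', ha', rfl⟩)),
      fun b' hb' => Order.lt_succ_iff.2 (hM (Or.inr ⟨b', hb', rfl⟩))⟩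

theorem nadd_lt_nadd_right {a b : Ordinal.{u}} (h : a < b) (c : Ordinal.{u}) : a ♯ c < b ♯ c :=
  (lt_nadd b c).1 a h

theorem nadd_lt_nadd_left {b c : Ordinal.{u}} (h : b < c) (a : Ordinal.{u}) : a ♯ b < a ♯ c :=
  (lt_nadd a c).2 b h

theorem nadd_le_iff {a b c : Ordinal.{u}} :
    a ♯ b ≤ c ↔ (∀ a' < a, a' ♯ b < c) ∧ ∀ b' < b, a ♯ b' < c :=
  ⟨fun h => ⟨fun a' ha' => (nadd_lt_nadd_right ha' b).trans_le h,
    fun b' hb' => (nadd_lt_nadd_left hb' a).trans_le h⟩,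
   fun h => by rw [nadd_def]; exact csInf_le' h⟩

theorem nadd_comm (a b : Ordinal.{u}) : a ♯ b = b ♯ a := by
  induction a using WellFoundedLT.induction generalizing b with | _ a IHa => ?_
  induction b using WellFoundedLT.induction with | _ b IHb => ?_
  rw [nadd_def a b, nadd_def b a]
  congr 1
  ext c
  refine and_comm.trans (and_congr ?_ ?_) <;> refine forall₂_congr fun x hx => ?_
  · rw [IHb x hx]
  · rw [IHa x hx b]

theorem exists_eq_omega0_opow_mul_add {a d : Ordinal.{u}} (h : a < ω ^ (d + 1)) :
    ∃ m : ℕ, ∃ r < ω ^ d, a = ω ^ d * m + r := by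
  have hd : ω ^ d ≠ 0 := opow_ne_zero _ omega0_ne_zero
  rw [opow_add_one] at h
  obtain ⟨m, hm⟩ := lt_omega0.1 ((lt_mul_iff_div_lt hd).1 h)
  exact ⟨m, a % ω ^ d, mod_lt a hd, by rw [← hm, div_add_mod]⟩

theorem omega0_opow_mul_add_lt_mul_succ {d r : Ordinal.{u}} (hr : r < ω ^ d) (m : ℕ) :
    ω ^ d * m + r < ω ^ d * (m + 1 : ℕ) :=
  calc ω ^ d * m + r < ω ^ d * m + ω ^ d := add_lt_add_right hr _
    _ = ω ^ d * (m + 1 : ℕ) := by push_cast; rw [mul_add_one]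

theorem omega0_opow_mul_add_lt_opow_add_one {d r : Ordinal.{u}} (hr : r < ω ^ d) (m : ℕ) :
    ω ^ d * m + r < ω ^ (d + 1) :=
  (omega0_opow_mul_add_lt_mul_succ hr m).trans
    (opow_mul_lt_opow (natCast_lt_omega0 _) (lt_add_one d))

theorem omega0_opow_mul_add_lt {d r : Ordinal.{u}} {m n : ℕ} (hmn : m < n) (hr : r < ω ^ d)
    (s : Ordinal.{u}) : ω ^ d * m + r < ω ^ d * n + s :=
  calc ω ^ d * m + r < ω ^ d * (m + 1 : ℕ) := omega0_opow_mul_add_lt_mul_succ hr m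
    _ ≤ ω ^ d * n := mul_le_mul_right (by exact_mod_cast hmn) _
    _ ≤ ω ^ d * n + s := le_self_add

theorem nadd_omega0_opow_mul_add_le {d : Ordinal.{u}}
    (hd : ∀ u < ω ^ d, ∀ v < ω ^ d, u ♯ v < ω ^ d) {m n : ℕ} {r s : Ordinal.{u}}
    (hr : r < ω ^ d) (hs : s < ω ^ d) :
    (ω ^ d * m + r) ♯ (ω ^ d * n + s) ≤ ω ^ d * (m + n : ℕ) + (r ♯ s) := by
  suffices H : ∀ c, ∀ (m n : ℕ) (r s : Ordinal.{u}), r < ω ^ d → s < ω ^ d →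
      (ω ^ d * m + r) ♯ (ω ^ d * n + s) ≤ c →
      (ω ^ d * m + r) ♯ (ω ^ d * n + s) ≤ ω ^ d * (m + n : ℕ) + (r ♯ s) from
    H _ m n r s hr hs le_rfl
  intro c
  -- induct on the value of the natural sum, so that both summands can be lowered alike
  induction c using WellFoundedLT.induction with | _ c IH => ?_
  have lower_left : ∀ (m n : ℕ) (r s : Ordinal.{u}), r < ω ^ d → s < ω ^ d →
      (ω ^ d * m + r) ♯ (ω ^ d * n + s) ≤ c → ∀ a' < ω ^ d * m + r,
      a' ♯ (ω ^ d * n + s) < ω ^ d * (m + n : ℕ) + (r ♯ s) := by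
    intro m n r s hr hs hc a' ha'
    have hlt := (nadd_lt_nadd_right ha' _).trans_le hc
    obtain ⟨m', r', hr', rfl⟩ := exists_eq_omega0_opow_mul_add
      (ha'.trans (omega0_opow_mul_add_lt_opow_add_one hr m))
    rcases lt_trichotomy m' m with hm | rfl | hm
    · exact (IH _ hlt m' n r' s hr' hs le_rfl).trans_lt
        (omega0_opow_mul_add_lt (by omega) (hd _ hr' _ hs) _)
    · have hr'r : r' < r := (add_lt_add_iff_left _).1 ha'
      exact (IH _ hlt _ n r' s hr' hs le_rfl).trans_lt
        (add_lt_add_right (nadd_lt_nadd_right hr'r s) _)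
    · exact absurd ha' (omega0_opow_mul_add_lt hm hr r').not_gt
  intro m n r s hr hs hc
  refine nadd_le_iff.2 ⟨lower_left m n r s hr hs hc, fun b' hb' => ?_⟩
  rw [nadd_comm, Nat.add_comm m n, nadd_comm r s]
  exact lower_left n m s r hs hr (by rwa [nadd_comm]) b' hb'

theorem nadd_lt_omega0_opow {e a b : Ordinal.{u}} (ha : a < ω ^ e) (hb : b < ω ^ e) :
    a ♯ b < ω ^ e := by
  induction e using Ordinal.limitRecOn generalizing a b with
  | zero =>
    rw [opow_zero, Order.lt_one_iff] at ha hb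
    subst ha hb
    rw [opow_zero, Order.lt_one_iff, ← nonpos_iff_eq_zero, nadd_le_iff]
    simp
  | add_one d IH =>
    obtain ⟨m, r, hr, rfl⟩ := exists_eq_omega0_opow_mul_add ha
    obtain ⟨n, s, hs, rfl⟩ := exists_eq_omega0_opow_mul_add hb
    exact (nadd_omega0_opow_mul_add_le (fun _ hu _ hv => IH hu hv) hr hs).trans_lt
      (omega0_opow_mul_add_lt_opow_add_one (IH hr hs) _)
  | limit e he IH =>
    obtain ⟨c₁, hc₁, ha⟩ := (lt_opow_of_isSuccLimit omega0_ne_zero he).1 ha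
    obtain ⟨c₂, hc₂, hb⟩ := (lt_opow_of_isSuccLimit omega0_ne_zero he).1 hb
    have hmono : ∀ {x y : Ordinal.{u}}, x ≤ y → ω ^ x ≤ ω ^ y := opow_le_opow_right omega0_pos
    exact (IH _ (max_lt hc₁ hc₂) (ha.trans_le (hmono (le_max_left _ _)))
      (hb.trans_le (hmono (le_max_right _ _)))).trans
      ((opow_lt_opow_iff_right one_lt_omega0).2 (max_lt hc₁ hc₂))

/-! ### Left Cantor–Bendixson derivatives -/

/-- The `ξ`-th left Cantor–Bendixson derivative of `S`. Note that `0` is vacuously a left limit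
of everything, so it stays in every derivative of a set containing it. -/
def cbDerived (S : Set Ordinal) (ξ : Ordinal) : Set Ordinal :=
  {x | x ∈ S ∧ ∀ ζ < ξ, ∀ β < x, (cbDerived S ζ ∩ Ioo β x).Nonempty}
termination_by ξ
decreasing_by assumption

section

variable {S T A B : Set Ordinal} {x y : Ordinal}

theorem mem_cbDerived {ξ : Ordinal} :
    x ∈ cbDerived S ξ ↔ x ∈ S ∧ ∀ ζ < ξ, ∀ β < x, (cbDerived S ζ ∩ Ioo β x).Nonempty := by
  rw [cbDerived]
  rfl

theorem cbDerived_subset {ξ : Ordinal} : cbDerived S ξ ⊆ S :=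
  fun _ hx => (mem_cbDerived.1 hx).1

theorem cbDerived_antitone : Antitone (cbDerived S) := fun _ _ h _ hx =>
  mem_cbDerived.2 ⟨cbDerived_subset hx, fun ζ hζ => (mem_cbDerived.1 hx).2 ζ (hζ.trans_le h)⟩

theorem cbDerived_mono (h : S ⊆ T) {ξ : Ordinal} : cbDerived S ξ ⊆ cbDerived T ξ := by
  induction ξ using WellFoundedLT.induction with | _ ξ IH => ?_
  intro x hx
  rw [mem_cbDerived] at hx ⊢
  exact ⟨h hx.1, fun ζ hζ β hβ => (hx.2 ζ hζ β hβ).mono (inter_subset_inter_left _ (IH ζ hζ))⟩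

theorem exists_cbDerived_inter_Ioo_eq_empty {σ : Ordinal} (hxS : x ∈ S)
    (hx : x ∉ cbDerived S σ) : ∃ ζ < σ, ∃ β < x, cbDerived S ζ ∩ Ioo β x = ∅ := by
  simpa [mem_cbDerived, hxS, not_nonempty_iff_eq_empty] using hx

theorem notMem_cbDerived_union_nadd_add_one {g t : Ordinal}
    (hA : ∃ β < y, cbDerived A g ∩ Ioo β y = ∅) (hB : ∃ β < y, cbDerived B t ∩ Ioo β y = ∅) :
    y ∉ cbDerived (A ∪ B) (g ♯ t + 1) := by
  induction y using WellFoundedLT.induction generalizing A B g t with | _ y IH => ?_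
  obtain ⟨βA, hβA, hA⟩ := hA
  obtain ⟨βB, hβB, hB⟩ := hB
  intro hy
  obtain ⟨z, hz, hβz, hzy⟩ :=
    (mem_cbDerived.1 hy).2 (g ♯ t) (lt_add_one _) (max βA βB) (max_lt hβA hβB)
  have hβAz : βA < z := (le_max_left _ _).trans_lt hβz
  have hβBz : βB < z := (le_max_right _ _).trans_lt hβz
  have shrink : ∀ {C : Set Ordinal} {β : Ordinal}, β < z → C ∩ Ioo β y = ∅ → C ∩ Ioo β z = ∅ :=
    fun _ h => eq_empty_of_subset_empty <|
      (inter_subset_inter_right _ (Ioo_subset_Ioo_right hzy.le)).trans h.subset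
  rcases cbDerived_subset hz with hzA | hzB
  · obtain ⟨g', hg', β', hβ', hA'⟩ := exists_cbDerived_inter_Ioo_eq_empty hzA fun h =>
      hA.subset ⟨h, hβAz, hzy⟩
    exact IH z hzy ⟨β', hβ', hA'⟩ ⟨βB, hβBz, shrink hβBz hB⟩ <|
      cbDerived_antitone (Order.add_one_le_iff.2 (nadd_lt_nadd_right hg' t)) hz
  · obtain ⟨t', ht', β', hβ', hB'⟩ := exists_cbDerived_inter_Ioo_eq_empty hzB fun h =>
      hB.subset ⟨h, hβBz, hzy⟩
    have := IH z hzy ⟨β', hβ', hB'⟩ ⟨βA, hβAz, shrink hβAz hA⟩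
    rw [union_comm, nadd_comm] at this
    exact this (cbDerived_antitone (Order.add_one_le_iff.2 (nadd_lt_nadd_left ht' g)) hz)

theorem cbDerived_union_eq_empty {σ τ : Ordinal} (hA : cbDerived A σ = ∅)
    (hB : cbDerived B τ = ∅) : cbDerived (A ∪ B) (σ ♯ τ) = ∅ := by
  have key : ∀ {A B : Set Ordinal} {σ τ : Ordinal}, cbDerived A σ = ∅ → cbDerived B τ = ∅ →
      ∀ x ∈ A, x ∉ cbDerived (A ∪ B) (σ ♯ τ) := by
    intro A B σ τ hA hB x hx
    obtain ⟨ζ, hζ, β, hβ, hζx⟩ := exists_cbDerived_inter_Ioo_eq_empty hx (hA ▸ notMem_empty x)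
    exact fun h => notMem_cbDerived_union_nadd_add_one ⟨β, hβ, hζx⟩ ⟨β, hβ, by simp [hB]⟩
      (cbDerived_antitone (Order.add_one_le_iff.2 (nadd_lt_nadd_right hζ τ)) h)
  refine eq_empty_of_forall_notMem fun x hx => ?_
  rcases cbDerived_subset hx with hxA | hxB
  · exact key hA hB x hxA hx
  · rw [union_comm, nadd_comm] at hx
    exact key hB hA x hxB hx

theorem exists_cbDerived_biUnion_eq_empty {ι : Type*} (s : Finset ι) {A : ι → Set Ordinal}
    {γ e : Ordinal} (hγ : γ < ω ^ e) (hA : ∀ i ∈ s, cbDerived (A i) γ = ∅) :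
    ∃ δ < ω ^ e, cbDerived (⋃ i ∈ s, A i) δ = ∅ := by
  classical
  induction s using Finset.induction_on with
  | empty => exact ⟨0, opow_pos _ omega0_pos, by simpa using cbDerived_subset (S := ∅)⟩
  | insert i s _ IH =>
    obtain ⟨δ, hδ, hD⟩ := IH fun j hj => hA j (Finset.mem_insert_of_mem hj)
    refine ⟨γ ♯ δ, nadd_lt_omega0_opow hγ hδ, ?_⟩
    rw [Finset.set_biUnion_insert]
    exact cbDerived_union_eq_empty (hA i (Finset.mem_insert_self i s)) hD

theorem add_omega0_opow_mem_cbDerived (β δ : Ordinal) :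
    β + ω ^ δ ∈ cbDerived (Ioc β (β + ω ^ δ)) δ := by
  induction δ using WellFoundedLT.induction generalizing β with | _ δ IH => ?_
  refine mem_cbDerived.2 ⟨⟨lt_add_of_pos_right β (opow_pos δ omega0_pos), le_rfl⟩,
    fun ζ hζ β' hβ' => ?_⟩
  set γ := max β β'
  have hβγ : β ≤ γ := le_max_left _ _
  have hγ : γ - β < ω ^ δ := by
    rw [sub_lt_of_le hβγ]
    exact max_lt (lt_add_of_pos_right β (opow_pos δ omega0_pos)) hβ'
  have hζδ : ω ^ ζ < ω ^ δ := (opow_lt_opow_iff_right one_lt_omega0).2 hζ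
  have hlt : γ + ω ^ ζ < β + ω ^ δ := by
    rw [← Ordinal.add_sub_cancel_of_le hβγ, add_assoc]
    exact add_lt_add_right (isPrincipal_add_omega0_opow δ hγ hζδ) β
  refine ⟨γ + ω ^ ζ, cbDerived_mono ?_ (IH ζ hζ γ), ?_, hlt⟩
  · exact Ioc_subset_Ioc hβγ hlt.le
  · exact (le_max_right _ _).trans_lt (lt_add_of_pos_right γ (opow_pos ζ omega0_pos))

end

/-! ### Closed copies -/

theorem isOrderCopy_iff {X : Set Ordinal} {a : Ordinal} :
    IsOrderCopy X a ↔ ∃ f : Ordinal → Ordinal, StrictMonoOn f X ∧ f '' X = Iio a := by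
  classical
  refine ⟨fun ⟨e⟩ => ?_, fun ⟨f, hf, himg⟩ =>
    ⟨(hf.orderIso f X).trans (OrderIso.setCongr _ _ himg)⟩⟩
  refine ⟨fun x => if hx : x ∈ X then (e ⟨x, hx⟩ : Ordinal) else 0, fun x hx y hy hxy => ?_, ?_⟩
  · simpa [hx, hy] using e.strictMono (show (⟨x, hx⟩ : X) < ⟨y, hy⟩ from hxy)
  · ext v
    refine ⟨fun ⟨x, hx, hv⟩ => by simp [← hv, hx], fun hv => ?_⟩
    exact ⟨e.symm ⟨v, hv⟩, (e.symm ⟨v, hv⟩).2, by simp⟩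

theorem isClosedCopy_singleton (y : Ordinal) : IsClosedCopy {y} 1 := by
  refine ⟨isOrderCopy_iff.2 ⟨fun _ => 0, strictMonoOn_singleton _, ?_⟩, fun S hS hne hlt => ?_⟩
  · ext v
    simp
  · rw [hne.subset_singleton_iff.1 hS] at hlt
    exact absurd hlt (lt_irrefl _)

theorem IsClosedCopy.insert_sSup {X : Set Ordinal} {L : Ordinal} (h : IsClosedCopy X L)
    (hX : ∀ x ∈ X, x < sSup X) : IsClosedCopy (insert (sSup X) X) (L + 1) := by
  classical
  set y := sSup X
  have hyX : y ∉ X := fun hy => lt_irrefl y (hX y hy)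
  have hgreatest : IsGreatest (insert y X) y :=
    ⟨mem_insert y X, forall_mem_insert.2 ⟨le_rfl, fun x hx => (hX x hx).le⟩⟩
  obtain ⟨⟨f, hf, himg⟩, hclosed⟩ := isOrderCopy_iff.1 h.1, h.2
  refine ⟨isOrderCopy_iff.2 ⟨Function.update f y L, ?_, ?_⟩, fun S hS hne hlt => ?_⟩
  · have hfX : ∀ x ∈ X, Function.update f y L x = f x := fun x hx =>
      Function.update_of_ne (ne_of_mem_of_not_mem hx hyX) _ _
    rintro a (rfl | ha) b (rfl | hb) hab
    · exact absurd hab (lt_irrefl _)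
    · exact absurd (hX b hb) hab.not_gt
    · rw [hfX a ha, Function.update_self]
      exact (himg ▸ mem_image_of_mem f ha : f a ∈ Iio L)
    · rw [hfX a ha, hfX b hb]
      exact hf ha hb hab
  · rw [image_insert_eq, Function.update_self, image_congr fun x hx =>
      Function.update_of_ne (ne_of_mem_of_not_mem hx hyX) L f, himg, Iio_insert,
      ← Order.Iio_succ, Order.succ_eq_add_one]
  · rw [hgreatest.csSup_eq] at hlt
    have hyS : y ∉ S := fun hyS => hlt.not_ge (le_csSup (hgreatest.bddAbove.mono hS) hyS)
    exact mem_insert_of_mem y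
      (hclosed S (fun x hx => (hS hx).resolve_left (ne_of_mem_of_not_mem hx hyS)) hne hlt)

def blockSum (T : ℕ → Ordinal) : ℕ → Ordinal
  | 0 => 0
  | n + 1 => blockSum T n + T n

theorem blockSum_monotone (T : ℕ → Ordinal) : Monotone (blockSum T) :=
  monotone_nat_of_le_succ fun _ => le_self_add

theorem exists_blockSum_le_lt {T : ℕ → Ordinal} {v : Ordinal} (hv : v < ⨆ n, blockSum T n) :
    ∃ n, blockSum T n ≤ v ∧ v < blockSum T (n + 1) := by
  obtain ⟨n, hn, hn'⟩ := Nat.exists_not_and_succ_of_not_zero_of_exists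
    (p := fun n => v < blockSum T n) (by simp [blockSum]) ((lt_ciSup_iff bddAbove_of_small).1 hv)
  exact ⟨n, not_lt.1 hn, hn'⟩

theorem csSup_inter_Ioi_of_lt {α : Type*} [ConditionallyCompleteLinearOrder α] {S : Set α}
    {b : α} (hS : BddAbove S) (hb : b < sSup S) : sSup (S ∩ Ioi b) = sSup S := by
  rcases S.eq_empty_or_nonempty with rfl | hne
  · rw [empty_inter]
  obtain ⟨x₀, hx₀S, hx₀⟩ := exists_lt_of_lt_csSup hne hb
  have hbdd : BddAbove (S ∩ Ioi b) := hS.mono inter_subset_left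
  refine le_antisymm (csSup_le_csSup hS ⟨x₀, hx₀S, hx₀⟩ inter_subset_left)
    (csSup_le hne fun x hx => ?_)
  rcases lt_or_ge b x with h | h
  · exact le_csSup hbdd ⟨hx, h⟩
  · exact h.trans (hx₀.le.trans (le_csSup hbdd ⟨hx₀S, hx₀⟩))

section iUnion

variable {X : ℕ → Set Ordinal} {l : ℕ → Ordinal}

theorem lt_of_mem_Ioc_fences (hX : ∀ n, X n ⊆ Ioc (l n) (l (n + 1))) (hl : Monotone l)
    {m n : ℕ} (hmn : m < n) {x z : Ordinal} (hx : x ∈ X m) (hz : z ∈ X n) : x < z :=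
  (hX m hx).2.trans_lt ((hl hmn).trans_lt (hX n hz).1)

theorem eq_of_mem_Ioc_fences (hX : ∀ n, X n ⊆ Ioc (l n) (l (n + 1))) (hl : Monotone l)
    {m n : ℕ} {x : Ordinal} (hm : x ∈ X m) (hn : x ∈ X n) : m = n := by
  by_contra hne
  rcases Nat.lt_or_gt_of_ne hne with h | h
  · exact lt_irrefl _ (lt_of_mem_Ioc_fences hX hl h hm hn)
  · exact lt_irrefl _ (lt_of_mem_Ioc_fences hX hl h hn hm)

theorem isOrderCopy_iUnion {T : ℕ → Ordinal} (hX : ∀ n, X n ⊆ Ioc (l n) (l (n + 1)))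
    (hl : Monotone l) (hcopy : ∀ n, IsOrderCopy (X n) (T n)) :
    IsOrderCopy (⋃ n, X n) (⨆ n, blockSum T n) := by
  classical
  choose g hg himg using fun n => isOrderCopy_iff.1 (hcopy n)
  have hgT : ∀ n, ∀ x ∈ X n, g n x < T n := fun n x hx => (himg n ▸ mem_image_of_mem _ hx :)
  let idx : Ordinal → ℕ := fun x => if h : ∃ n, x ∈ X n then h.choose else 0
  have hidx : ∀ {n x}, x ∈ X n → idx x = n := fun hx => by
    simp only [idx, dif_pos (⟨_, hx⟩ : ∃ n, _ ∈ X n)]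
    exact eq_of_mem_Ioc_fences hX hl (Exists.choose_spec (⟨_, hx⟩ : ∃ n, _ ∈ X n)) hx
  refine isOrderCopy_iff.2 ⟨fun x => blockSum T (idx x) + g (idx x) x, ?_, ?_⟩
  · rintro x hx x' hx' hxx'
    obtain ⟨m, hm⟩ := mem_iUnion.1 hx
    obtain ⟨n, hn⟩ := mem_iUnion.1 hx'
    simp only [hidx hm, hidx hn]
    rcases lt_trichotomy m n with h | rfl | h
    · calc blockSum T m + g m x < blockSum T (m + 1) := add_lt_add_right (hgT m x hm) _
        _ ≤ blockSum T n := blockSum_monotone T h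
        _ ≤ _ := le_self_add
    · exact add_lt_add_right (hg m hm hn hxx') _
    · exact absurd hxx' (lt_of_mem_Ioc_fences hX hl h hn hm).not_gt
  · ext v
    constructor
    · rintro ⟨x, hx, rfl⟩
      obtain ⟨n, hn⟩ := mem_iUnion.1 hx
      simp only [hidx hn]
      exact (add_lt_add_right (hgT n x hn) _).trans_le (le_ciSup bddAbove_of_small (n + 1))
    · intro hv
      obtain ⟨n, hnv, hvn⟩ := exists_blockSum_le_lt hv
      have : v - blockSum T n ∈ g n '' X n := by
        rw [himg, mem_Iio, sub_lt_of_le hnv]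
        exact hvn
      obtain ⟨x, hx, hgx⟩ := this
      exact ⟨x, mem_iUnion.2 ⟨n, hx⟩, by simp only [hidx hx, hgx, Ordinal.add_sub_cancel_of_le hnv]⟩

theorem isClosedCopy_iUnion {T : ℕ → Ordinal} (hX : ∀ n, X n ⊆ Ioc (l n) (l (n + 1)))
    (htop : ∀ n, l (n + 1) ∈ X n) (hcopy : ∀ n, IsClosedCopy (X n) (T n)) :
    IsClosedCopy (⋃ n, X n) (⨆ n, blockSum T n) := by
  classical
  have hl : Monotone l := monotone_nat_of_le_succ fun n => (hX n (htop n)).1.le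
  refine ⟨isOrderCopy_iUnion hX hl fun n => (hcopy n).1, fun S hS hne hlt => ?_⟩
  have hSbdd : BddAbove S := ⟨⨆ n, l n, fun x hx => by
    obtain ⟨n, hn⟩ := mem_iUnion.1 (hS hx)
    exact (hX n hn).2.trans (le_ciSup bddAbove_of_small (n + 1))⟩
  set σ := sSup S
  have h0σ : l 0 < σ := by
    obtain ⟨x, hx⟩ := hne
    obtain ⟨j, hj⟩ := mem_iUnion.1 (hS hx)
    exact (hl (Nat.zero_le j)).trans_lt ((hX j hj).1.trans_le (le_csSup hSbdd hx))
  have hex : ∃ n, σ ≤ l n := by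
    obtain ⟨x, hx, hσx⟩ := exists_lt_of_lt_csSup (hne.mono hS) hlt
    obtain ⟨n, hn⟩ := mem_iUnion.1 hx
    exact ⟨n + 1, hσx.le.trans (hX n hn).2⟩
  -- in the first block `X n` whose top reaches `σ` lies all of `S` above `l n`
  obtain ⟨n, hnσ, hσn⟩ := Nat.exists_not_and_succ_of_not_zero_of_exists h0σ.not_ge hex
  rw [not_le] at hnσ
  have hS' : S ∩ Ioi (l n) ⊆ X n := by
    rintro x ⟨hxS, hnx⟩
    obtain ⟨j, hj⟩ := mem_iUnion.1 (hS hxS)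
    rcases lt_trichotomy j n with h | rfl | h
    · exact absurd ((hX j hj).2.trans (hl h)) hnx.not_ge
    · exact hj
    · exact absurd ((hσn.trans (hl h)).trans_lt (hX j hj).1) (le_csSup hSbdd hxS).not_gt
  have hsup : sSup (S ∩ Ioi (l n)) = σ := csSup_inter_Ioi_of_lt hSbdd hnσ
  have hXn : sSup (X n) = l (n + 1) := IsGreatest.csSup_eq ⟨htop n, fun x hx => (hX n hx).2⟩
  refine mem_iUnion.2 ⟨n, ?_⟩
  rcases hσn.lt_or_eq with h | h
  · rw [← hsup]
    obtain ⟨x₀, hx₀S, hx₀⟩ := exists_lt_of_lt_csSup hne hnσ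
    exact (hcopy n).2 _ hS' ⟨x₀, hx₀S, hx₀⟩ (by rwa [hsup, hXn])
  · exact h ▸ htop n

end iUnion

/-! ### Closed copies below points of given rank -/

/-- The order type of the closed copy found below a point of rank `α`: the point itself for
`α = 0`, and `ω ^ α` points below it otherwise. -/
def toppedOpow (α : Ordinal) : Ordinal := if α = 0 then 1 else ω ^ α + 1

theorem omega0_opow_le_toppedOpow (α : Ordinal) : ω ^ α ≤ toppedOpow α := by
  unfold toppedOpow
  split_ifs with h
  · rw [h, opow_zero]
  · exact le_self_add

theorem toppedOpow_lt_omega0_opow {α β : Ordinal} (h : α < β) : toppedOpow α < ω ^ β := by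
  have hαβ : ω ^ α < ω ^ β := (opow_lt_opow_iff_right one_lt_omega0).2 h
  have h1 : 1 < ω ^ β := (Order.one_le_iff_pos.2 (opow_pos α omega0_pos)).trans_lt hαβ
  unfold toppedOpow
  split_ifs
  · exact h1
  · exact isPrincipal_add_omega0_opow β hαβ h1

def HasToppedCopy (A : Set Ordinal) (a u z : Ordinal) : Prop :=
  ∃ X ⊆ A ∩ Ioc u z, z ∈ X ∧ IsClosedCopy X a

theorem exists_seq_frequently_eq {y : Ordinal} (hy : 0 < y) (hc : y.card ≤ ℵ₀) :
    ∃ f : ℕ → Ordinal, (∀ n, f n < y) ∧ ∀ v < y, ∀ N, ∃ n ≥ N, f n = v := by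
  have : Countable (Iio y) := by
    rwa [← mk_le_aleph0_iff, Cardinal.mk_Iio_ordinal, lift_le_aleph0]
  have : Nonempty (Iio y) := ⟨⟨0, hy⟩⟩
  obtain ⟨g, hg⟩ := exists_surjective_nat (Iio y)
  refine ⟨fun n => g n.unpair.1, fun n => (g _).2, fun v hv N => ?_⟩
  obtain ⟨i, hi⟩ := hg ⟨v, hv⟩
  exact ⟨Nat.pair i N, Nat.right_le_pair i N, by simp [hi]⟩

theorem iSup_blockSum_toppedOpow {α : Ordinal} (hα : α ≠ 0) {γ : ℕ → Ordinal}
    (hγ : ∀ n, γ n < α) (hfreq : ∀ ζ < α, ∀ N, ∃ n ≥ N, γ n = ζ) :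
    ⨆ n, blockSum (fun n => toppedOpow (γ n)) n = ω ^ α := by
  set s := blockSum fun n => toppedOpow (γ n)
  have hs : ∀ n, s n < ω ^ α := fun n => by
    induction n with
    | zero => exact opow_pos α omega0_pos
    | succ n IH => exact isPrincipal_add_omega0_opow α IH (toppedOpow_lt_omega0_opow (hγ n))
  refine le_antisymm (ciSup_le fun n => (hs n).le) (le_of_forall_lt fun v hv => ?_)
  obtain ⟨ζ, hζ, m, hv⟩ := (lt_omega0_opow hα).1 hv
  have hmul : ∀ m : ℕ, ∃ N, ω ^ ζ * m ≤ s N := by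
    intro m
    induction m with
    | zero => exact ⟨0, by simp⟩
    | succ m IH =>
      obtain ⟨N, hN⟩ := IH
      obtain ⟨n, hnN, rfl⟩ := hfreq ζ hζ N
      refine ⟨n + 1, ?_⟩
      calc ω ^ γ n * (m + 1 : ℕ) = ω ^ γ n * m + ω ^ γ n := by push_cast; rw [mul_add_one]
        _ ≤ s n + toppedOpow (γ n) :=
          add_le_add (hN.trans (blockSum_monotone _ hnN)) (omega0_opow_le_toppedOpow _)
  obtain ⟨N, hN⟩ := hmul m
  exact hv.trans_le (hN.trans (le_ciSup bddAbove_of_small N))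

theorem exists_closedCopy_iSup_blockSum {A : Set Ordinal} {T w : ℕ → Ordinal} {β y : Ordinal}
    (hβ : β < y) (hwy : ∀ n, w n < y) (hw : ∀ v < y, ∃ n, w n = v)
    (h : ∀ n, ∀ u < y, ∃ z < y, HasToppedCopy A (T n) u z) :
    ∃ X ⊆ A ∩ Ioo β y, sSup X = y ∧ IsClosedCopy X (⨆ n, blockSum T n) := by
  classical
  -- block `n` is taken above both the previous block and `w n`, so the blocks are cofinal in `y`
  have h' : ∀ n u, ∃ z, ∃ X : Set Ordinal, u < y →
      z < y ∧ X ⊆ A ∩ Ioc (max u (w n)) z ∧ z ∈ X ∧ IsClosedCopy X (T n) := by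
    intro n u
    by_cases hu : u < y
    · obtain ⟨z, hz, X, hXA, hzX, hX⟩ := h n (max u (w n)) (max_lt hu (hwy n))
      exact ⟨z, X, fun _ => ⟨hz, hXA, hzX, hX⟩⟩
    · exact ⟨0, ∅, fun h => absurd h hu⟩
  choose Z B hZB using h'
  let l : ℕ → Ordinal := fun n => Nat.rec β (fun n ln => Z n ln) n
  have hly : ∀ n, l n < y := fun n => by
    induction n with
    | zero => exact hβ
    | succ n IH => exact (hZB n (l n) IH).1
  have hspec := fun n => hZB n (l n) (hly n)
  have hX : ∀ n, B n (l n) ⊆ Ioc (l n) (l (n + 1)) := fun n x hx =>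
    ⟨(le_max_left _ _).trans_lt ((hspec n).2.1 hx).2.1, ((hspec n).2.1 hx).2.2⟩
  have htop : ∀ n, l (n + 1) ∈ B n (l n) := fun n => (hspec n).2.2.1
  have hl : Monotone l := monotone_nat_of_le_succ fun n => (hX n (htop n)).1.le
  have hlt : ∀ x ∈ ⋃ n, B n (l n), x < y := fun x hx => by
    obtain ⟨n, hn⟩ := mem_iUnion.1 hx
    exact (hX n hn).2.trans_lt (hly (n + 1))
  refine ⟨⋃ n, B n (l n), fun x hx => ?_, ?_, isClosedCopy_iUnion hX htop fun n => (hspec n).2.2.2⟩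
  · obtain ⟨n, hn⟩ := mem_iUnion.1 hx
    exact ⟨((hspec n).2.1 hn).1, (hl (Nat.zero_le n)).trans_lt (hX n hn).1, hlt x hx⟩
  · have hbdd : BddAbove (⋃ n, B n (l n)) := ⟨y, fun x hx => (hlt x hx).le⟩
    refine le_antisymm (csSup_le ⟨_, mem_iUnion.2 ⟨0, htop 0⟩⟩ fun x hx => (hlt x hx).le)
      (le_of_forall_lt fun v hv => ?_)
    obtain ⟨n, rfl⟩ := hw v hv
    exact ((le_max_right _ _).trans_lt ((hspec n).2.1 (htop n)).2.1).trans_le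
      (le_csSup hbdd (mem_iUnion.2 ⟨n, htop n⟩))

theorem exists_closedCopy_omega0_opow {A : Set Ordinal} {α β y : Ordinal} (hα : α ≠ 0)
    (hαc : α.card ≤ ℵ₀) (hyc : y.card ≤ ℵ₀) (hβ : β < y)
    (h : ∀ ζ < α, ∀ u < y, ∃ z < y, HasToppedCopy A (toppedOpow ζ) u z) :
    ∃ X ⊆ A ∩ Ioo β y, sSup X = y ∧ IsClosedCopy X (ω ^ α) := by
  obtain ⟨γ, hγ, hγfreq⟩ := exists_seq_frequently_eq (pos_iff_ne_zero.2 hα) hαc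
  obtain ⟨w, hwy, hw⟩ := exists_seq_frequently_eq (hβ.trans_le' zero_le) hyc
  obtain ⟨X, hXA, hXy, hX⟩ := exists_closedCopy_iSup_blockSum hβ hwy
    (fun v hv => (hw v hv 0).imp fun _ hn => hn.2) fun n => h (γ n) (hγ n)
  rw [iSup_blockSum_toppedOpow hα hγ hγfreq] at hX
  exact ⟨X, hXA, hXy, hX⟩

theorem hasToppedCopy_of_mem_cbDerived {α : Ordinal} (hαc : α.card ≤ ℵ₀) {A : Set Ordinal}
    {β y : Ordinal} (hy : y ∈ cbDerived A α) (hβ : β < y) (hyc : y.card ≤ ℵ₀) :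
    HasToppedCopy A (toppedOpow α) β y := by
  induction α using WellFoundedLT.induction generalizing β y with | _ α IH => ?_
  have hyI : y ∈ A ∩ Ioc β y := ⟨cbDerived_subset hy, hβ, le_rfl⟩
  rcases eq_or_ne α 0 with rfl | hα
  · exact ⟨{y}, singleton_subset_iff.2 hyI, rfl,
      by simpa [toppedOpow] using isClosedCopy_singleton y⟩
  obtain ⟨X, hXA, hXy, hX⟩ := exists_closedCopy_omega0_opow hα hαc hyc hβ fun ζ hζ u hu => by
    obtain ⟨z, hz, huz, hzy⟩ := (mem_cbDerived.1 hy).2 ζ hζ u hu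
    exact ⟨z, hzy, IH ζ hζ ((card_le_card hζ.le).trans hαc) hz huz
      ((card_le_card hzy.le).trans hyc)⟩
  have hcopy := hX.insert_sSup fun x hx => hXy ▸ (hXA hx).2.2
  rw [hXy] at hcopy
  refine ⟨insert y X, insert_subset hyI fun x hx => ?_, mem_insert y X, ?_⟩
  · exact ⟨(hXA hx).1, (hXA hx).2.1, (hXA hx).2.2.le⟩
  · simpa [toppedOpow, hα] using hcopy

theorem card_omega0_opow_le {b : Ordinal} (hb : b.card ≤ ℵ₀) : (ω ^ b).card ≤ ℵ₀ :=
  (card_opow_le_of_omega0_le_left le_rfl b).trans (max_le card_omega0.le hb)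

theorem exists_fiber_cbDerived_nonempty {ι : Type*} [Fintype ι] (c : Ordinal → ι)
    (e : Ordinal) : ∃ i, ∀ ζ < ω ^ e, ∀ u < ω ^ ω ^ e,
      (cbDerived (c ⁻¹' {i} ∩ Ioo u (ω ^ ω ^ e)) ζ).Nonempty := by
  set a : Ordinal := ω ^ ω ^ e
  by_contra! hc
  choose ζ hζ u hu hempty using hc
  set γ := Finset.univ.sup ζ
  set v := Finset.univ.sup u
  have hγ : γ < ω ^ e := (Finset.sup_lt_iff (opow_pos _ omega0_pos)).2 fun i _ => hζ i
  have hv : v < a := (Finset.sup_lt_iff (opow_pos _ omega0_pos)).2 fun i _ => hu i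
  obtain ⟨δ, hδ, hD⟩ := exists_cbDerived_biUnion_eq_empty Finset.univ hγ
    (A := fun i => c ⁻¹' {i} ∩ Ioo v a) fun i _ => by
      have hi := Finset.le_sup (f := ζ) (Finset.mem_univ i)
      have hui := Finset.le_sup (f := u) (Finset.mem_univ i)
      refine eq_empty_of_subset_empty ((cbDerived_antitone hi).trans ?_)
      exact (cbDerived_mono (inter_subset_inter_right _ (Ioo_subset_Ioo_left hui))).trans
        (hempty i).subset
  have hunion : ⋃ i ∈ Finset.univ, c ⁻¹' {i} ∩ Ioo v a = Ioo v a := by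
    ext x
    simp
  rw [hunion] at hD
  have hva : v + ω ^ δ < a :=
    isPrincipal_add_omega0_opow _ hv ((opow_lt_opow_iff_right one_lt_omega0).2 hδ)
  exact notMem_empty _ <|
    hD.subset (cbDerived_mono (Ioc_subset_Ioo_right hva) (add_omega0_opow_mem_cbDerived v δ))

end Ordinal

open Ordinal

theorem stmt6_general (b : Ordinal) (hb : b.card ≤ Cardinal.aleph0)
    (k : ℕ) :
    ToClosed1 ((ω : Ordinal) ^ (ω : Ordinal) ^ b) ((ω : Ordinal) ^ (ω : Ordinal) ^ b) k := by
  intro c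
  obtain ⟨i, hi⟩ := exists_fiber_cbDerived_nonempty c b
  have hαc : ((ω : Ordinal) ^ b).card ≤ ℵ₀ := card_omega0_opow_le hb
  have hac := card_omega0_opow_le hαc
  obtain ⟨X, hXA, -, hX⟩ := exists_closedCopy_omega0_opow (A := c ⁻¹' {i})
    (opow_ne_zero _ omega0_ne_zero) hαc hac (opow_pos _ omega0_pos) fun ζ hζ u hu => by
      obtain ⟨z, hz⟩ := hi ζ hζ u hu
      obtain ⟨-, huz, hza⟩ := cbDerived_subset hz
      obtain ⟨Y, hYA, hzY, hY⟩ := hasToppedCopy_of_mem_cbDerived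
        ((card_le_card hζ.le).trans hαc) hz huz ((card_le_card hza.le).trans hac)
      exact ⟨z, hza, Y, fun y hy => ⟨(hYA hy).1.1, (hYA hy).2⟩, hzY, hY⟩
  exact ⟨i, X, fun x hx => (hXA hx).2.2, fun x hx => (hXA hx).1, hX⟩

/-- for countable nonzero `β` and finite `k`,
`ω^(ω^β) →_cl (ω^(ω^β))¹_k`. -/
theorem stmt6 (b : Ordinal) (hb0 : b ≠ 0) (hb : b.card ≤ Cardinal.aleph0)
    (k : ℕ) (hk : 0 < k) :
    ToClosed1 ((ω : Ordinal) ^ (ω : Ordinal) ^ b) ((ω : Ordinal) ^ (ω : Ordinal) ^ b) k :=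
  stmt6_general b hb k

end
end

section
/- ω²·2 + ω + 1 ↛_cl (ω+2, 3)²: there exists a coloring c of the pairs from ω²·2+ω+1 with colors red and blue such that there is no blue triangle (3 points with all pairs blue) and no red-homogeneous subset that is order-isomorphic to ω+2 and closed in its supremum. -/
open Ordinal Set

noncomputable section

/-!
Label the points of `ω²·2 + ω + 1` by the vertices of the 5-cycle and colour a pair blue when
the labels of its points are adjacent, so that a blue triangle would be a triangle in the 5-cycle.
In a closed copy `Z ∪ {x, y}` of `ω + 2` the point `x = sup Z` is a limit ordinal approached by
`Z`. If `x = ω·(q + 1)` (in particular if `x < ω²` or `ω² < x < ω²·2`), the points of `Z` just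
below `x` are successor ordinals, labelled `4` resp. `1`, while `x` is labelled `3` resp. `2`.
If `x = ω²` (label `0`), then a point of `Z` (label `3` or `4`), `x` and `y` (label `1` or `2`)
contain an adjacent pair. If `x = ω²·2` (label `1`), then `y` is one of the last `ω` points,
all labelled `2`. So no closed copy of `ω + 2` is red.
-/

open SimpleGraph Order

open Fin.CommRing in
theorem cycleGraph_cliqueFree_three {n : ℕ} (hn : 4 ≤ n) : (cycleGraph n).CliqueFree 3 := by
  obtain ⟨m, rfl⟩ : ∃ m, n = m + 2 := ⟨n - 2, by omega⟩
  intro s hs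
  obtain ⟨a, b, c, hab, hac, hbc, rfl⟩ := is3Clique_iff.1 hs
  rw [cycleGraph_adj] at hab hac hbc
  have h3 : (3 : Fin (m + 2)) ≠ 0 := by
    simp [Fin.ext_iff, Nat.mod_eq_of_lt (show 3 < m + 2 by omega)]
  -- `(a - b) - (a - c) + (b - c) = 0` would be a sum of three signs `±1`
  rcases hab with hab | hab <;> rcases hac with hac | hac <;> rcases hbc with hbc | hbc <;> grind

def graphColoring {V : Type*} (G : SimpleGraph V) [DecidableRel G.Adj] (f : Ordinal → V) :
    Ordinal → Ordinal → Bool :=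
  fun a b => !decide (G.Adj (f a) (f b))

section graphColoring

variable {V : Type*} (G : SimpleGraph V) [DecidableRel G.Adj] (f : Ordinal → V)

theorem homog_graphColoring_true_iff {X : Set Ordinal} :
    Homog (graphColoring G f) true X ↔ ∀ u ∈ X, ∀ v ∈ X, u < v → ¬ G.Adj (f u) (f v) := by
  simp [Homog, graphColoring]

theorem not_blueSet_graphColoring_three (hG : G.CliqueFree 3) (β : Ordinal) :
    ¬ BlueSet (graphColoring G f) β 3 := by
  classical
  rintro ⟨H, -, hcard, hblue⟩
  have hadj : ∀ u ∈ H, ∀ v ∈ H, u ≠ v → G.Adj (f u) (f v) := by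
    intro u hu v hv huv
    rcases huv.lt_or_gt with h | h
    · simpa [graphColoring] using hblue u hu v hv h
    · simpa [graphColoring, G.adj_comm] using hblue v hv u hu h
  obtain ⟨a, b, c, hab, hac, hbc, rfl⟩ := Finset.card_eq_three.1 hcard
  exact hG {f a, f b, f c} <| is3Clique_triple_iff.2
    ⟨hadj a (by simp) b (by simp) hab, hadj a (by simp) c (by simp) hac,
      hadj b (by simp) c (by simp) hbc⟩

end graphColoring

theorem IsClosedCopy.exists_limit_point {X : Set Ordinal} (hX : IsClosedCopy X (ω + 2)) :
    ∃ x ∈ X, ∃ y ∈ X, x < y ∧ (∃ z ∈ X, z < x) ∧ ∀ a < x, ∃ u ∈ X, a < u ∧ u < x := by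
  obtain ⟨⟨e⟩, hclosed⟩ := hX
  have hω1 : ω + 1 < ω + 2 := by gcongr; norm_num
  set x : Ordinal := (e.symm ⟨ω, (lt_add_one _).trans hω1⟩ : Ordinal)
  set y : Ordinal := (e.symm ⟨ω + 1, hω1⟩ : Ordinal)
  have hxy : x < y := e.symm.lt_iff_lt.2 (Subtype.mk_lt_mk.2 (lt_add_one ω))
  have hlt_x (u : Ordinal) (hu : u ∈ X) : u < x ↔ (e ⟨u, hu⟩ : Ordinal) < ω :=
    e.lt_symm_apply (x := ⟨u, hu⟩)
  have hsup_X : sSup X = y := by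
    refine IsGreatest.csSup_eq ⟨(e.symm _).2, fun u hu => (e.le_symm_apply (x := ⟨u, hu⟩)).2 ?_⟩
    rw [← Subtype.coe_le_coe, ← Order.lt_add_one_iff, add_assoc, one_add_one_eq_two]
    exact (e _).2
  set S := X ∩ Iio x
  have hS : S.Nonempty := by
    refine ⟨e.symm ⟨0, add_pos omega0_pos two_pos⟩, (e.symm _).2, (hlt_x _ (e.symm _).2).2 ?_⟩
    simp [omega0_pos]
  -- `S` is the copy of `ω` inside `X`, so it has no maximum
  have hS_nomax (u : Ordinal) (hu : u ∈ S) : ∃ v ∈ S, u < v := by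
    have hn := (hlt_x u hu.1).1 hu.2
    have hn1 := isSuccLimit_omega0.succ_lt hn
    refine ⟨e.symm ⟨_, hn1.trans ((lt_add_one _).trans hω1)⟩, ⟨(e.symm _).2, ?_⟩, ?_⟩
    · exact (hlt_x _ (e.symm _).2).2 (by simpa using hn1)
    · exact (e.lt_symm_apply (x := ⟨u, hu.1⟩)).2 (Subtype.mk_lt_mk.2 (lt_succ _))
  have hsup_S : sSup S = x := by
    refine (csSup_le hS fun u hu => hu.2.le).antisymm (not_lt.1 fun hlt => ?_)
    have hmem : sSup S ∈ S :=
      ⟨hclosed S inter_subset_left hS (hsup_X ▸ hlt.trans hxy), hlt⟩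
    obtain ⟨v, hv, hlt_v⟩ := hS_nomax _ hmem
    exact hlt_v.not_ge (le_csSup ⟨x, fun u hu => hu.2.le⟩ hv)
  refine ⟨x, (e.symm _).2, y, (e.symm _).2, hxy, hS, fun a ha => ?_⟩
  obtain ⟨u, hu, hau⟩ := exists_lt_of_lt_csSup hS (hsup_S ▸ ha)
  exact ⟨u, hu.1, hau, hu.2⟩

theorem omega0_opow_two : ω ^ (2 : Ordinal) = ω * ω := by
  rw [← Nat.cast_ofNat, opow_natCast, pow_two]

theorem not_omega0_dvd_of_lt_of_lt {q u : Ordinal} (h₁ : ω * q < u) (h₂ : u < ω * (q + 1)) :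
    ¬ ω ∣ u := by
  rintro ⟨k, rfl⟩
  rw [mul_lt_mul_iff_right₀ omega0_pos] at h₁ h₂
  exact (lt_add_one_iff.1 h₂).not_gt h₁

theorem exists_eq_add_one_of_not_omega0_dvd {k : Ordinal} (hk : ¬ ω ∣ k) : ∃ q, k = q + 1 := by
  rw [← isSuccPrelimit_iff_omega0_dvd, not_isSuccPrelimit_iff_succ_eq] at hk
  obtain ⟨q, -, rfl⟩ := hk
  exact ⟨q, succ_eq_add_one q⟩

open Classical in
def cycleLabel (α : Ordinal) : Fin 5 :=
  if α < ω * ω then (if ω ∣ α then 3 else 4)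
  else if α = ω * ω then 0
  else if α < ω * ω * 2 then (if ω ∣ α then 2 else 1)
  else if α = ω * ω * 2 then 1
  else 2

open Classical in
theorem cycleLabel_of_lt {α : Ordinal} (h : α < ω * ω) :
    cycleLabel α = if ω ∣ α then 3 else 4 := by
  rw [cycleLabel, if_pos h]

theorem cycleLabel_omega0_mul_omega0 : cycleLabel (ω * ω) = 0 := by
  simp [cycleLabel]

open Classical in
theorem cycleLabel_of_lt_of_lt {α : Ordinal} (h₁ : ω * ω < α) (h₂ : α < ω * ω * 2) :
    cycleLabel α = if ω ∣ α then 2 else 1 := by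
  rw [cycleLabel, if_neg h₁.not_gt, if_neg h₁.ne', if_pos h₂]

theorem omega0_mul_omega0_lt_mul_two : ω * ω < ω * ω * 2 :=
  lt_mul_of_one_lt_right (mul_pos omega0_pos omega0_pos) one_lt_two

theorem cycleLabel_omega0_mul_omega0_mul_two : cycleLabel (ω * ω * 2) = 1 := by
  have h := omega0_mul_omega0_lt_mul_two
  rw [cycleLabel, if_neg h.not_gt, if_neg h.ne', if_neg (lt_irrefl _), if_pos rfl]

theorem cycleLabel_of_gt {α : Ordinal} (h : ω * ω * 2 < α) : cycleLabel α = 2 := by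
  have h' := omega0_mul_omega0_lt_mul_two.trans h
  rw [cycleLabel, if_neg h'.not_gt, if_neg h'.ne', if_neg h.not_gt, if_neg h.ne']

theorem cycleLabel_of_gt_omega0_mul_omega0 {α : Ordinal} (h : ω * ω < α) :
    cycleLabel α = 1 ∨ cycleLabel α = 2 := by
  rw [cycleLabel, if_neg h.not_gt, if_neg h.ne']
  split_ifs <;> simp

theorem exists_mem_not_omega0_dvd {X : Set Ordinal} {q : Ordinal}
    (hcof : ∀ a < ω * (q + 1), ∃ u ∈ X, a < u ∧ u < ω * (q + 1)) :
    ∃ u ∈ X, ω * q < u ∧ u < ω * (q + 1) ∧ ¬ ω ∣ u := by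
  obtain ⟨u, hu, hqu, hux⟩ := hcof (ω * q) (by gcongr; exacts [omega0_pos, lt_add_one q])
  exact ⟨u, hu, hqu, hux, not_omega0_dvd_of_lt_of_lt hqu hux⟩

theorem exists_adj_cycleLabel {X : Set Ordinal} {x y : Ordinal} (hx : x ∈ X) (hy : y ∈ X)
    (hxy : x < y) (hy_le : y ≤ ω * ω * 2 + ω) (hz : ∃ z ∈ X, z < x)
    (hcof : ∀ a < x, ∃ u ∈ X, a < u ∧ u < x) :
    ∃ u ∈ X, ∃ v ∈ X, u < v ∧ (cycleGraph 5).Adj (cycleLabel u) (cycleLabel v) := by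
  obtain ⟨k, rfl⟩ : ω ∣ x := by
    refine isSuccPrelimit_iff_omega0_dvd.1 (isSuccPrelimit_of_succ_lt fun a ha => ?_)
    obtain ⟨u, -, hau, hux⟩ := hcof a ha
    exact (succ_le_of_lt hau).trans_lt hux
  obtain ⟨z, hzX, hzx⟩ := hz
  rcases lt_trichotomy k ω with hk | rfl | hk
  · have hk0 : 0 < k := pos_of_ne_zero (by rintro rfl; simp at hzx)
    obtain ⟨q, rfl⟩ := exists_eq_add_one_of_not_omega0_dvd
      (not_omega0_dvd_of_lt_of_lt (q := 0) (by simpa) (by simpa))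
    obtain ⟨u, hu, -, hux, hu_dvd⟩ := exists_mem_not_omega0_dvd hcof
    have hx_lt : ω * (q + 1) < ω * ω := by gcongr; exact omega0_pos
    refine ⟨u, hu, _, hx, hux, ?_⟩
    rw [cycleLabel_of_lt (hux.trans hx_lt), cycleLabel_of_lt hx_lt, if_neg hu_dvd,
      if_pos (dvd_mul_right _ _)]
    decide
  · have hz_label : cycleLabel z = 3 ∨ cycleLabel z = 4 := by
      rw [cycleLabel_of_lt hzx]; split_ifs <;> simp
    rcases hz_label with hz_label | hz_label
    · rcases cycleLabel_of_gt_omega0_mul_omega0 hxy with hy_label | hy_label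
      · exact ⟨_, hx, y, hy, hxy, by rw [cycleLabel_omega0_mul_omega0, hy_label]; decide⟩
      · exact ⟨z, hzX, y, hy, hzx.trans hxy, by rw [hz_label, hy_label]; decide⟩
    · exact ⟨z, hzX, _, hx, hzx, by rw [hz_label, cycleLabel_omega0_mul_omega0]; decide⟩
  rcases lt_trichotomy k (ω * 2) with hk2 | rfl | hk2
  · obtain ⟨q, rfl⟩ := exists_eq_add_one_of_not_omega0_dvd
      (not_omega0_dvd_of_lt_of_lt (q := 1) (by simpa) (by rwa [one_add_one_eq_two]))
    obtain ⟨u, hu, hqu, hux, hu_dvd⟩ := exists_mem_not_omega0_dvd hcof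
    have hωq : ω * ω ≤ ω * q := by gcongr; exact lt_add_one_iff.1 hk
    have hx_lt : ω * (q + 1) < ω * ω * 2 := by rw [mul_assoc]; gcongr; exact omega0_pos
    refine ⟨u, hu, _, hx, hux, ?_⟩
    rw [cycleLabel_of_lt_of_lt (hωq.trans_lt hqu) (hux.trans hx_lt),
      cycleLabel_of_lt_of_lt (hωq.trans_lt (hqu.trans hux)) hx_lt, if_neg hu_dvd,
      if_pos (dvd_mul_right _ _)]
    decide
  · rw [← mul_assoc] at hx hxy
    exact ⟨_, hx, y, hy, hxy, by
      rw [cycleLabel_omega0_mul_omega0_mul_two, cycleLabel_of_gt hxy]; decide⟩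
  · have : ω * k < ω * (ω * 2 + 1) := by
      rw [mul_add, mul_one, ← mul_assoc]; exact hxy.trans_le hy_le
    rw [mul_lt_mul_iff_right₀ omega0_pos, lt_add_one_iff] at this
    exact absurd hk2 this.not_gt

theorem not_homog_graphColoring_cycleLabel {X : Set Ordinal} (hX : IsClosedCopy X (ω + 2))
    (hX_sub : X ⊆ Iio (ω * ω * 2 + ω + 1)) :
    ¬ Homog (graphColoring (cycleGraph 5) cycleLabel) true X := by
  obtain ⟨x, hx, y, hy, hxy, hz, hcof⟩ := hX.exists_limit_point
  have hy_le : y ≤ ω * ω * 2 + ω := lt_add_one_iff.1 (hX_sub hy)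
  obtain ⟨u, hu, v, hv, huv, hadj⟩ := exists_adj_cycleLabel hx hy hxy hy_le hz hcof
  exact fun hred => (homog_graphColoring_true_iff _ _).1 hred u hu v hv huv hadj

/-- `ω²·2 + ω + 1 ↛_cl (ω+2, 3)²`. -/
theorem stmt7 :
    ¬ ToClosed2 ((ω : Ordinal) ^ (2 : Ordinal) * 2 + ω + 1) (ω + 2) 3 := by
  rw [omega0_opow_two]
  intro h
  rcases h (graphColoring (cycleGraph 5) cycleLabel) with ⟨X, hX_sub, hX, hred⟩ | hblue
  · exact not_homog_graphColoring_cycleLabel hX hX_sub hred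
  · exact not_blueSet_graphColoring_three _ _ (cycleGraph_cliqueFree_three (by norm_num)) _ hblue

end
end

section
/- Weak Erdős–Milner theorem: let α, β be countable nonzero ordinals and k > 1 a positive integer. If ω^α → (ω^(1+β), k)², then ω^(α+β) → (ω^(1+β), k+1)². -/
open Ordinal Set

noncomputable section

/-!
Fix a colouring `c` of pairs from `ω^(α+β)`. If some point `x` has a blue neighbourhood containing
a copy of `ω^α`, the hypothesis applied inside that neighbourhood gives either a red copy of
`ω^(1+β)` or a blue `k`-set, which `x` extends to a blue `(k+1)`-set.

Otherwise no blue neighbourhood contains a copy of `ω^α`. Since `ω^α` is indivisible (whenever a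
copy of it is split in two, one part still contains a copy), finitely many blue neighbourhoods never
cover a final segment of a block `[ω^α·i, ω^α·i + ω^α)`. Visiting the countably many blocks
`i < ω^β` infinitely often, pick in turn a point above the earlier points of its block and outside
the blue neighbourhoods of all earlier points. The chosen points form a red set meeting every block
in an `ω`-sequence, hence a red copy of `ω·ω^β = ω^(1+β)`.
-/

namespace ErdosMilner

universe u

def ContainsCopy (S : Set Ordinal.{u}) (D : Ordinal.{u}) : Prop :=
  ∃ f : Ordinal.{u} → Ordinal.{u}, StrictMonoOn f (Iio D) ∧ MapsTo f (Iio D) S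

lemma ContainsCopy.mono {S T : Set Ordinal} {D : Ordinal} (h : ContainsCopy S D) (hST : S ⊆ T) :
    ContainsCopy T D :=
  let ⟨f, hf, hfS⟩ := h
  ⟨f, hf, hfS.mono_right hST⟩

lemma containsCopy_Iio (D : Ordinal) : ContainsCopy (Iio D) D :=
  ⟨id, strictMonoOn_id, mapsTo_id _⟩

lemma containsCopy_image_Ico {f : Ordinal → Ordinal} {L D : Ordinal}
    (hf : StrictMonoOn f (Ico L (L + D))) : ContainsCopy (f '' Ico L (L + D)) D := by
  have hL : MapsTo (L + ·) (Iio D) (Ico L (L + D)) := fun x hx =>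
    ⟨le_self_add, add_lt_add_right hx L⟩
  exact ⟨fun x => f (L + x), fun x hx y hy hxy => hf (hL hx) (hL hy) (add_lt_add_right hxy L),
    fun x hx => mem_image_of_mem f (hL hx)⟩

lemma containsCopy_range_of_strictMono {g : ℕ → Ordinal} (hg : StrictMono g) :
    ContainsCopy (range g) ω := by
  have hnat : ∀ x < ω, ((Cardinal.toNat x.card : ℕ) : Ordinal) = x := by
    intro x hx
    obtain ⟨n, rfl⟩ := lt_omega0.1 hx
    simp
  refine ⟨fun x => g (Cardinal.toNat x.card), fun x hx y hy hxy => hg ?_,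
    fun x _ => mem_range_self _⟩
  rw [← Nat.cast_lt (α := Ordinal), hnat x hx, hnat y hy]
  exact hxy

lemma IsOrderCopy.image {X s : Set Ordinal} {d : Ordinal} {f : Ordinal → Ordinal}
    (h : IsOrderCopy X d) (hXs : X ⊆ s) (hf : StrictMonoOn f s) : IsOrderCopy (f '' X) d := by
  obtain ⟨iso⟩ := h
  let E : X → f '' X := fun x => ⟨f x, mem_image_of_mem f x.2⟩
  have hE : StrictMono E := fun x y hxy => hf (hXs x.2) (hXs y.2) hxy
  have hEsurj : Function.Surjective E := by
    rintro ⟨_, x, hx, rfl⟩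
    exact ⟨⟨x, hx⟩, rfl⟩
  exact ⟨(hE.orderIsoOfSurjective E hEsurj).symm.trans iso⟩

lemma ContainsCopy.exists_isOrderCopy {S : Set Ordinal} {D : Ordinal} (h : ContainsCopy S D) :
    ∃ X ⊆ S, IsOrderCopy X D := by
  obtain ⟨f, hf, hfS⟩ := h
  exact ⟨f '' Iio D, hfS.image_subset, IsOrderCopy.image ⟨OrderIso.refl _⟩ subset_rfl hf⟩

lemma strictMonoOn_of_lex {α β γ : Type*} [Preorder α] [PartialOrder β] [Preorder γ]
    {s : Set α} {φ : α → β} {F : α → γ} (hφ : MonotoneOn φ s)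
    (hlt : ∀ x ∈ s, ∀ y ∈ s, φ x < φ y → F x < F y)
    (heq : ∀ x ∈ s, ∀ y ∈ s, x < y → φ x = φ y → F x < F y) : StrictMonoOn F s :=
  fun x hx y hy hxy => (hφ hx hy hxy.le).lt_or_eq.elim (hlt x hx y hy) (heq x hx y hy hxy)

lemma mul_add_self_le_mul (W : Ordinal) {i j : Ordinal} (h : i < j) : W * i + W ≤ W * j := by
  rw [← mul_add_one]
  exact mul_le_mul_right (Order.add_one_le_of_lt h) W

lemma omega0_opow_add_self_le {v w : Ordinal} (h : v < w) : ω ^ v + ω ^ v ≤ ω ^ w := by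
  have hsucc : ω ^ v < ω ^ Order.succ v :=
    (opow_lt_opow_iff_right one_lt_omega0).2 (Order.lt_succ v)
  exact (isPrincipal_add_omega0_opow _ hsucc hsucc).le.trans
    (opow_le_opow_right omega0_pos (Order.succ_le_of_lt h))

lemma containsCopy_mul {W D : Ordinal} {J A : Set Ordinal} {S : Ordinal → Set Ordinal}
    (hJ : ContainsCopy J D) (hS : ∀ i ∈ J, ∀ j ∈ J, i < j → ∀ x ∈ S i, ∀ y ∈ S j, x < y)
    (h : ∀ j ∈ J, ContainsCopy (A ∩ S j) W) : ContainsCopy A (W * D) := by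
  rcases eq_or_ne W 0 with rfl | hW
  · exact ⟨id, fun x hx => absurd hx (by simp), fun x hx => absurd hx (by simp)⟩
  obtain ⟨ι, hι, hιJ⟩ := hJ
  choose! g hg hgS using h
  have hdiv : ∀ x ∈ Iio (W * D), x / W ∈ Iio D := fun x hx => (lt_mul_iff_div_lt hW).1 hx
  have hmem : ∀ x ∈ Iio (W * D), g (ι (x / W)) (x % W) ∈ A ∩ S (ι (x / W)) := fun x hx =>
    hgS _ (hιJ (hdiv x hx)) (mod_lt x hW)
  refine ⟨fun x => g (ι (x / W)) (x % W), strictMonoOn_of_lex (φ := (· / W))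
    (fun x _ y _ hxy => div_le_left hxy W) (fun x hx y hy hlt => ?_)
    (fun x hx y hy hxy heq => ?_), fun x hx => (hmem x hx).1⟩
  · exact hS _ (hιJ (hdiv x hx)) _ (hιJ (hdiv y hy)) (hι (hdiv x hx) (hdiv y hy) hlt) _
      (hmem x hx).2 _ (hmem y hy).2
  · have hmod : x % W < y % W := by
      rw [← add_lt_add_iff_left (W * (x / W)), div_add_mod, heq, div_add_mod]
      exact hxy
    simp only [heq] at hmod ⊢
    exact hg _ (hιJ (hdiv y hy)) (mod_lt x hW) (mod_lt y hW) hmod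

lemma containsCopy_of_forall_lt {D : Ordinal} {P A : Set Ordinal} {d : Ordinal → Ordinal}
    {S : Ordinal → Set Ordinal} (hD : ∀ x < D, ∃ w ∈ P, x < d w)
    (hS : ∀ v ∈ P, ∀ w ∈ P, v < w → ∀ x ∈ S v, ∀ y ∈ S w, x < y)
    (h : ∀ w ∈ P, ContainsCopy (A ∩ S w) (d w)) : ContainsCopy A D := by
  choose! g hg hgS using h
  set N : Ordinal → Ordinal := fun x => sInf {w | w ∈ P ∧ x < d w}
  have hN : ∀ x < D, N x ∈ P ∧ x < d (N x) := fun x hx => csInf_mem (hD x hx)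
  have hmem : ∀ x < D, g (N x) x ∈ A ∩ S (N x) := fun x hx => hgS _ (hN x hx).1 (hN x hx).2
  refine ⟨fun x => g (N x) x, strictMonoOn_of_lex (φ := N)
    (fun x _ y hy hxy => csInf_le' ⟨(hN y hy).1, hxy.trans_lt (hN y hy).2⟩)
    (fun x hx y hy hlt => hS _ (hN x hx).1 _ (hN y hy).1 hlt _ (hmem x hx).2 _ (hmem y hy).2)
    (fun x hx y hy hxy heq => ?_), fun x hx => (hmem x hx).1⟩
  simp only [heq]
  exact hg _ (hN y hy).1 (hxy.trans (hN y hy).2) (hN y hy).2 hxy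

lemma cofinal_or_cofinal {α : Type*} [LinearOrder α] {e : α} {P Q : Set α}
    (h : Iio e ⊆ P ∪ Q) : (∀ z < e, ∃ w ∈ P, z ≤ w) ∨ (∀ z < e, ∃ w ∈ Q, z ≤ w) := by
  by_contra! hcon
  obtain ⟨⟨z₁, hz₁, hP⟩, ⟨z₂, hz₂, hQ⟩⟩ := hcon
  rcases h (max_lt hz₁ hz₂) with hm | hm
  · exact (hP _ hm).not_ge (le_max_left _ _)
  · exact (hQ _ hm).not_ge (le_max_right _ _)

/-- The pigeonhole relation `D → (D)¹₂`. -/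
def IsIndivisible (D : Ordinal.{u}) : Prop :=
  ∀ A B : Set Ordinal.{u}, ContainsCopy (A ∪ B) D → ContainsCopy A D ∨ ContainsCopy B D

lemma isIndivisible_one : IsIndivisible 1 := by
  rintro A B ⟨f, hf, hfAB⟩
  have h0 : (0 : Ordinal) ∈ Iio 1 := mem_Iio.2 zero_lt_one
  have hcopy : ∀ C : Set Ordinal, f 0 ∈ C → ContainsCopy C 1 := fun C hC =>
    ⟨fun _ => f 0, fun x hx y hy hxy => by simp_all, fun _ _ => hC⟩
  exact (hfAB h0).imp (hcopy A) (hcopy B)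

lemma isIndivisible_omega0 : IsIndivisible ω := by
  rintro A B ⟨f, hf, hfAB⟩
  have hcopy : ∀ C : Set Ordinal, {n : ℕ | f n ∈ C}.Infinite → ContainsCopy C ω := by
    intro C hC
    obtain ⟨φ, hφ, hφC⟩ := Nat.exists_strictMono_subsequence (P := fun n => f n ∈ C)
      fun N => (hC.exists_gt N).imp fun n hn => ⟨hn.2, hn.1⟩
    have hmono : StrictMono (fun n => f (φ n)) := fun m n hmn =>
      hf (natCast_lt_omega0 _) (natCast_lt_omega0 _) (Nat.cast_lt.2 (hφ hmn))
    refine (containsCopy_range_of_strictMono hmono).mono ?_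
    rintro _ ⟨n, rfl⟩
    exact hφC n
  have hunion : {n : ℕ | f n ∈ A} ∪ {n : ℕ | f n ∈ B} = Set.univ :=
    eq_univ_of_forall fun n => hfAB (natCast_lt_omega0 n)
  have hinf : ({n : ℕ | f n ∈ A} ∪ {n : ℕ | f n ∈ B}).Infinite := by
    rw [hunion]
    exact infinite_univ
  exact (infinite_union.1 hinf).imp (hcopy A) (hcopy B)

lemma IsIndivisible.mul {W D : Ordinal} (hW : IsIndivisible W) (hD : IsIndivisible D) :
    IsIndivisible (W * D) := by
  rintro A B ⟨f, hf, hfAB⟩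
  set S : Ordinal → Set Ordinal := fun j => f '' Ico (W * j) (W * j + W)
  have hblock : ∀ j < D, Ico (W * j) (W * j + W) ⊆ Iio (W * D) := fun j hj x hx =>
    hx.2.trans_le (mul_add_self_le_mul W hj)
  have hsep : ∀ i j, i < j → j < D → ∀ x ∈ S i, ∀ y ∈ S j, x < y := by
    rintro i j hij hj _ ⟨u, hu, rfl⟩ _ ⟨v, hv, rfl⟩
    exact hf (hblock i (hij.trans hj) hu) (hblock j hj hv)
      (hu.2.trans_le ((mul_add_self_le_mul W hij).trans hv.1))
  have hsplit : ∀ j < D, ContainsCopy (A ∩ S j) W ∨ ContainsCopy (B ∩ S j) W := by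
    intro j hj
    refine hW _ _ ((containsCopy_image_Ico (hf.mono (hblock j hj))).mono fun y hy => ?_)
    obtain ⟨x, hx, rfl⟩ := hy
    exact (hfAB (hblock j hj hx)).imp (fun h => ⟨h, x, hx, rfl⟩) (fun h => ⟨h, x, hx, rfl⟩)
  have hglue : ∀ C : Set Ordinal,
      ContainsCopy {j | j < D ∧ ContainsCopy (C ∩ S j) W} D → ContainsCopy C (W * D) :=
    fun C hC => containsCopy_mul hC (fun i _ j hj hij => hsep i j hij hj.1) fun j hj => hj.2
  refine (hD _ _ ((containsCopy_Iio D).mono fun j hj => ?_)).imp (hglue A) (hglue B)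
  exact (hsplit j hj).imp (fun h => ⟨hj, h⟩) (fun h => ⟨hj, h⟩)

lemma isIndivisible_omega0_opow_of_isSuccLimit {e : Ordinal} (he : Order.IsSuccLimit e)
    (ih : ∀ w < e, IsIndivisible (ω ^ w)) : IsIndivisible (ω ^ e) := by
  rintro A B ⟨f, hf, hfAB⟩
  set S : Ordinal → Set Ordinal := fun w => f '' Ico (ω ^ w) (ω ^ w + ω ^ w)
  have hblock : ∀ w < e, Ico (ω ^ w) (ω ^ w + ω ^ w) ⊆ Iio (ω ^ e) := fun w hw x hx =>
    hx.2.trans_le (omega0_opow_add_self_le hw)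
  have hsep : ∀ v w, v < w → w < e → ∀ x ∈ S v, ∀ y ∈ S w, x < y := by
    rintro v w hvw hw _ ⟨u, hu, rfl⟩ _ ⟨u', hu', rfl⟩
    exact hf (hblock v (hvw.trans hw) hu) (hblock w hw hu')
      (hu.2.trans_le ((omega0_opow_add_self_le hvw).trans hu'.1))
  have hsplit : ∀ w < e, ContainsCopy (A ∩ S w) (ω ^ w) ∨ ContainsCopy (B ∩ S w) (ω ^ w) := by
    intro w hw
    refine ih w hw _ _ ((containsCopy_image_Ico (hf.mono (hblock w hw))).mono fun y hy => ?_)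
    obtain ⟨x, hx, rfl⟩ := hy
    exact (hfAB (hblock w hw hx)).imp (fun h => ⟨h, x, hx, rfl⟩) (fun h => ⟨h, x, hx, rfl⟩)
  set P : Set Ordinal → Set Ordinal := fun C => {w | w < e ∧ ContainsCopy (C ∩ S w) (ω ^ w)}
  have hglue : ∀ C, (∀ z < e, ∃ w ∈ P C, z ≤ w) → ContainsCopy C (ω ^ e) := by
    refine fun C hC => containsCopy_of_forall_lt (P := P C) (d := (ω ^ ·)) (fun x hx => ?_)
      (fun v _ w hw hvw => hsep v w hvw hw.1) fun w hw => hw.2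
    obtain ⟨z, hz, hxz⟩ := (lt_opow_of_isSuccLimit omega0_ne_zero he).1 hx
    obtain ⟨w, hw, hzw⟩ := hC z hz
    exact ⟨w, hw, hxz.trans_le (opow_le_opow_right omega0_pos hzw)⟩
  refine (cofinal_or_cofinal fun w hw => ?_).imp (hglue A) (hglue B)
  exact (hsplit w hw).imp (fun h => ⟨hw, h⟩) (fun h => ⟨hw, h⟩)

theorem isIndivisible_omega0_opow (a : Ordinal) : IsIndivisible (ω ^ a) := by
  induction a using Ordinal.limitRecOn with
  | zero => simpa using isIndivisible_one
  | add_one e ih => simpa [opow_add] using ih.mul isIndivisible_omega0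
  | limit e he ih => exact isIndivisible_omega0_opow_of_isSuccLimit he ih

lemma IsIndivisible.exists_containsCopy_biUnion {D : Ordinal} (hD : IsIndivisible D) (hD0 : D ≠ 0)
    {ι : Type*} (s : Finset ι) (T : ι → Set Ordinal) (h : ContainsCopy (⋃ i ∈ s, T i) D) :
    ∃ i ∈ s, ContainsCopy (T i) D := by
  classical
  induction s using Finset.induction_on with
  | empty =>
    obtain ⟨f, -, hf⟩ := h
    simpa using hf (mem_Iio.2 (pos_iff_ne_zero.2 hD0))
  | insert i s _ ih =>
    rw [Finset.set_biUnion_insert] at h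
    rcases hD _ _ h with hi | hs
    · exact ⟨i, Finset.mem_insert_self i s, hi⟩
    · obtain ⟨j, hj, hjT⟩ := ih hs
      exact ⟨j, Finset.mem_insert_of_mem hj, hjT⟩

theorem exists_seq_forall_of_forall_exists {α : Type*} [Nonempty α]
    (P : ℕ → (ℕ → α) → α → Prop) (hP : ∀ t q q', (∀ s < t, q s = q' s) → ∀ y, P t q y → P t q' y)
    (h : ∀ t q, (∀ s < t, P s q (q s)) → ∃ y, P t q y) : ∃ p : ℕ → α, ∀ t, P t p (p t) := by
  classical
  let next : ℕ → (ℕ → α) → α := fun t q =>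
    if hq : ∃ y, P t q y then hq.choose else Classical.arbitrary α
  let p : ℕ → α := Nat.strongRec fun t ih =>
    next t fun s => if hs : s < t then ih s hs else Classical.arbitrary α
  let before : ℕ → ℕ → α := fun t s => if s < t then p s else Classical.arbitrary α
  have hp : ∀ t, p t = next t (before t) := fun t => by
    show Nat.strongRec (motive := fun _ => α) _ t = _
    rw [Nat.strongRec_eq]
    simp only [before, dite_eq_ite]
    rfl
  have hbefore : ∀ t, ∀ s < t, before t s = p s := fun t s hs => if_pos hs
  refine ⟨p, fun t => ?_⟩
  induction t using Nat.strong_induction_on with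
  | _ t ih =>
    have hprev : ∀ s < t, P s (before t) (before t s) := fun s hs => by
      rw [hbefore t s hs]
      exact hP s p _ (fun r hr => (hbefore t r (hr.trans hs)).symm) _ (ih s hs)
    have hy := h t (before t) hprev
    have hnext : P t (before t) (p t) := by
      rw [hp t]
      simp only [next, dif_pos hy]
      exact hy.choose_spec
    exact hP t _ p (hbefore t) _ hnext

lemma exists_mem_Ico_forall_notMem {a : Ordinal} (ha : a ≠ 0) (l : Ordinal) (F : Finset Ordinal)
    (T : Ordinal → Set Ordinal) (hT : ∀ x ∈ F, ¬ ContainsCopy (T x) (ω ^ a)) :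
    ∃ y ∈ Ico l (l + ω ^ a), (∀ x ∈ F, x < l + ω ^ a → x < y) ∧ ∀ x ∈ F, y ∉ T x := by
  set W := ω ^ a
  have hW : 0 < W := opow_pos a omega0_pos
  have htop : Order.IsSuccLimit (l + W) :=
    isSuccLimit_add l (isSuccLimit_opow_left isSuccLimit_omega0 ha)
  set L := max l ((F.filter (· < l + W)).sup Order.succ)
  have hLtop : L < l + W := by
    refine max_lt (lt_add_of_pos_right l hW) ((Finset.sup_lt_iff (hW.trans_le le_add_self)).2 ?_)
    exact fun x hx => htop.succ_lt (Finset.mem_filter.1 hx).2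
  have hFL : ∀ x ∈ F, x < l + W → x < L := fun x hx hxt =>
    (Order.lt_succ x).trans_le ((Finset.le_sup (f := Order.succ)
      (Finset.mem_filter.2 ⟨hx, hxt⟩ : x ∈ F.filter (· < l + W))).trans (le_max_right _ _))
  have hLW : L + W = l + W := by
    have hr : L - l < W := sub_lt_of_lt_add hLtop hW
    calc L + W = l + (L - l) + W := by rw [Ordinal.add_sub_cancel_of_le (le_max_left _ _)]
      _ = l + W := by rw [add_assoc, add_omega0_opow hr]
  have hcover : ¬ Ico L (l + W) ⊆ ⋃ x ∈ F, T x := by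
    intro hsub
    obtain ⟨x, hx, hxT⟩ := (isIndivisible_omega0_opow a).exists_containsCopy_biUnion hW.ne' F T
      ((hLW ▸ containsCopy_image_Ico strictMonoOn_id).mono (by simpa using hsub))
    exact hT x hx hxT
  obtain ⟨y, hy, hyT⟩ := not_subset.1 hcover
  simp only [mem_iUnion, not_exists] at hyT
  exact ⟨y, ⟨(le_max_left _ _).trans hy.1, hy.2⟩, fun x hx hxt => (hFL x hx hxt).trans_le hy.1,
    fun x hx hyx => hyT x hx hyx⟩

lemma ToPlain2.exists_of_containsCopy {D d : Ordinal} {k : ℕ} {Y : Set Ordinal}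
    (h : ToPlain2 D d k) (hY : ContainsCopy Y D) (c : Ordinal → Ordinal → Bool) :
    (∃ X ⊆ Y, IsOrderCopy X d ∧ Homog c true X) ∨
      ∃ H : Finset Ordinal, ↑H ⊆ Y ∧ H.card = k ∧ Homog c false ↑H := by
  obtain ⟨f, hf, hfY⟩ := hY
  have hhomog : ∀ b X, X ⊆ Iio D → Homog (fun u v => c (f u) (f v)) b X → Homog c b (f '' X) := by
    rintro b X hX hXb _ ⟨u, hu, rfl⟩ _ ⟨v, hv, rfl⟩ huv
    exact hXb u hu v hv ((hf.lt_iff_lt (hX hu) (hX hv)).1 huv)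
  rcases h fun u v => c (f u) (f v) with ⟨X, hX, hXd, hXred⟩ | ⟨H, hH, hHk, hHblue⟩
  · exact Or.inl ⟨f '' X, (hfY.mono_left hX).image_subset, IsOrderCopy.image hXd hX hf,
      hhomog true X hX hXred⟩
  · refine Or.inr ⟨H.image f, ?_, ?_, ?_⟩
    · rw [Finset.coe_image]
      exact (hfY.mono_left hH).image_subset
    · rw [Finset.card_image_of_injOn (hf.injOn.mono hH), hHk]
    · rw [Finset.coe_image]
      exact hhomog false _ hH hHblue

section Colouring

variable (c : Ordinal → Ordinal → Bool)

def blueNbhd (x : Ordinal) : Set Ordinal :=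
  {y | (x < y ∧ c x y = false) ∨ (y < x ∧ c y x = false)}

variable {c}

lemma notMem_blueNbhd_self (x : Ordinal) : x ∉ blueNbhd c x := by
  simp [blueNbhd]

lemma mem_blueNbhd_comm {x y : Ordinal} : y ∈ blueNbhd c x ↔ x ∈ blueNbhd c y := by
  simp [blueNbhd, or_comm]

lemma eq_false_of_mem_blueNbhd {x y : Ordinal} (hxy : x < y) (h : y ∈ blueNbhd c x) :
    c x y = false := by
  simpa [blueNbhd, hxy, hxy.not_gt] using h

lemma eq_true_of_notMem_blueNbhd {x y : Ordinal} (hxy : x < y) (h : y ∉ blueNbhd c x) :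
    c x y = true := by
  simpa [blueNbhd, hxy, hxy.not_gt] using h

lemma homog_range_of_notMem_blueNbhd {p : ℕ → Ordinal}
    (h : ∀ s t, s < t → p t ∉ blueNbhd c (p s)) : Homog c true (range p) := by
  rintro _ ⟨s, rfl⟩ _ ⟨t, rfl⟩ hpst
  rcases lt_trichotomy s t with hst | rfl | hts
  · exact eq_true_of_notMem_blueNbhd hpst (h s t hst)
  · exact absurd hpst (lt_irrefl _)
  · exact eq_true_of_notMem_blueNbhd hpst (mt mem_blueNbhd_comm.1 (h t s hts))

lemma blueSet_insert {γ x : Ordinal} {k : ℕ} {H : Finset Ordinal} (hx : x < γ)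
    (hH : ↑H ⊆ blueNbhd c x ∩ Iio γ) (hcard : H.card = k) (hblue : Homog c false ↑H) :
    BlueSet c γ (k + 1) := by
  have hxH : x ∉ H := fun hxH => notMem_blueNbhd_self x (hH hxH).1
  refine ⟨insert x H, ?_, by rw [Finset.card_insert_of_notMem hxH, hcard], ?_⟩
  · rw [Finset.coe_insert]
    exact insert_subset hx fun y hy => (hH hy).2
  · rw [Finset.coe_insert]
    rintro u (rfl | hu) v (rfl | hv) huv
    · exact absurd huv (lt_irrefl _)
    · exact eq_false_of_mem_blueNbhd huv (hH hv).1
    · exact eq_false_of_mem_blueNbhd huv (mem_blueNbhd_comm.1 (hH hu).1)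
    · exact hblue u hu v hv huv

variable {a b : Ordinal}

lemma exists_red_seq (ha : a ≠ 0) {e : ℕ → Ordinal} (he : ∀ t, e t < ω ^ b)
    (hsmall : ∀ x < ω ^ (a + b), ¬ ContainsCopy (blueNbhd c x ∩ Iio (ω ^ (a + b))) (ω ^ a)) :
    ∃ p : ℕ → Ordinal, (∀ t, p t ∈ Ico (ω ^ a * e t) (ω ^ a * e t + ω ^ a)) ∧
      (∀ s t, s < t → e s = e t → p s < p t) ∧ ∀ s t, s < t → p t ∉ blueNbhd c (p s) := by
  have hblock : ∀ t, Ico (ω ^ a * e t) (ω ^ a * e t + ω ^ a) ⊆ Iio (ω ^ (a + b)) :=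
    fun t x hx => by
      rw [mem_Iio, opow_add]
      exact hx.2.trans_le (mul_add_self_le_mul _ (he t))
  set Good : ℕ → (ℕ → Ordinal) → Ordinal → Prop := fun t q y =>
    y ∈ Ico (ω ^ a * e t) (ω ^ a * e t + ω ^ a) ∧
      ∀ s < t, (e s = e t → q s < y) ∧ y ∉ blueNbhd c (q s)
  have hGood : ∀ t q q', (∀ s < t, q s = q' s) → ∀ y, Good t q y → Good t q' y := by
    rintro t q q' hqq' y ⟨hy, hyq⟩
    exact ⟨hy, fun s hs => hqq' s hs ▸ hyq s hs⟩
  have hstep : ∀ t q, (∀ s < t, Good s q (q s)) → ∃ y, Good t q y := by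
    intro t q hq
    have hprev : ∀ s < t, q s ∈ (Finset.range t).image q := fun s hs =>
      Finset.mem_image_of_mem q (Finset.mem_range.2 hs)
    obtain ⟨y, hy, hyabove, hyT⟩ := exists_mem_Ico_forall_notMem ha (ω ^ a * e t)
      ((Finset.range t).image q) (fun x => blueNbhd c x ∩ Iio (ω ^ (a + b))) (by
        simp only [Finset.mem_image, Finset.mem_range]
        rintro _ ⟨s, hs, rfl⟩
        exact hsmall _ (hblock s (hq s hs).1))
    refine ⟨y, hy, fun s hs => ⟨fun hest => hyabove _ (hprev s hs) ?_,
      fun hyq => hyT _ (hprev s hs) ⟨hyq, hblock t hy⟩⟩⟩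
    rw [← hest]
    exact (hq s hs).1.2
  obtain ⟨p, hp⟩ := exists_seq_forall_of_forall_exists Good hGood hstep
  exact ⟨p, fun t => (hp t).1, fun s t hst hest => ((hp t).2 s hst).1 hest,
    fun s t hst => ((hp t).2 s hst).2⟩

lemma exists_red_copy (ha : a ≠ 0) (hb : b.card ≤ Cardinal.aleph0)
    (hsmall : ∀ x < ω ^ (a + b), ¬ ContainsCopy (blueNbhd c x ∩ Iio (ω ^ (a + b))) (ω ^ a)) :
    ∃ X ⊆ Iio (ω ^ (a + b)), IsOrderCopy X (ω ^ (1 + b)) ∧ Homog c true X := by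
  have hcount : (Iio (ω ^ b)).Countable := by
    rw [← Cardinal.le_aleph0_iff_set_countable, Cardinal.mk_Iio_ordinal, Cardinal.lift_le_aleph0]
    exact (card_opow_le _ _).trans (by simp [hb])
  obtain ⟨u, hu⟩ := hcount.exists_eq_range ⟨0, opow_pos b omega0_pos⟩
  -- every block index `u m` is visited at the times `Nat.pair m n`, `n ∈ ℕ`
  set e : ℕ → Ordinal := fun t => u (Nat.unpair t).1
  have he : ∀ t, e t < ω ^ b := fun t => (hu ▸ mem_range_self _ : e t ∈ Iio (ω ^ b))
  obtain ⟨p, hpblock, hpmono, hpblue⟩ := exists_red_seq ha he hsmall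
  have hcopy : ContainsCopy (range p) (ω * ω ^ b) := by
    refine containsCopy_mul (J := Iio (ω ^ b)) (S := fun i => Ico (ω ^ a * i) (ω ^ a * i + ω ^ a))
      (containsCopy_Iio _) (fun i _ j _ hij x hx y hy => ?_) fun i hi => ?_
    · exact hx.2.trans_le ((mul_add_self_le_mul _ hij).trans hy.1)
    obtain ⟨m, rfl⟩ : i ∈ range u := hu ▸ hi
    have hmono : StrictMono fun n => p (Nat.pair m n) := fun n n' hnn' =>
      hpmono _ _ (Nat.pair_lt_pair_right m hnn') (by simp [e])
    refine (containsCopy_range_of_strictMono hmono).mono ?_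
    rintro _ ⟨n, rfl⟩
    exact ⟨mem_range_self _, by simpa [e] using hpblock (Nat.pair m n)⟩
  obtain ⟨X, hXp, hX⟩ := hcopy.exists_isOrderCopy
  have hred := homog_range_of_notMem_blueNbhd hpblue
  refine ⟨X, fun x hx => ?_, by rwa [opow_one_add], fun x hx y hy => hred x (hXp hx) y (hXp hy)⟩
  obtain ⟨t, rfl⟩ := hXp hx
  rw [mem_Iio, opow_add]
  exact (hpblock t).2.trans_le (mul_add_self_le_mul _ (he t))

end Colouring

end ErdosMilner

open ErdosMilner

theorem stmt13_general (a b : Ordinal) (ha0 : a ≠ 0)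
    (hbc : b.card ≤ Cardinal.aleph0)
    (k : ℕ)
    (h : ToPlain2 ((ω : Ordinal) ^ a) ((ω : Ordinal) ^ (1 + b)) k) :
    ToPlain2 ((ω : Ordinal) ^ (a + b)) ((ω : Ordinal) ^ (1 + b)) (k + 1) := by
  intro c
  by_cases hx : ∃ x < ω ^ (a + b), ContainsCopy (blueNbhd c x ∩ Iio (ω ^ (a + b))) (ω ^ a)
  · obtain ⟨x, hxγ, hcopy⟩ := hx
    rcases h.exists_of_containsCopy hcopy c with ⟨X, hX, hXd, hXred⟩ | ⟨H, hH, hHk, hHblue⟩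
    · exact Or.inl ⟨X, hX.trans inter_subset_right, hXd, hXred⟩
    · exact Or.inr (blueSet_insert hxγ hH hHk hHblue)
  · push Not at hx
    exact Or.inl (exists_red_copy ha0 hbc hx)

/-- weak Erdős–Milner: for countable nonzero `α, β` and `k > 1`,
if `ω^α → (ω^(1+β), k)²` then `ω^(α+β) → (ω^(1+β), k+1)²`. -/
theorem stmt13 (a b : Ordinal) (ha0 : a ≠ 0) (hb0 : b ≠ 0)
    (hac : a.card ≤ Cardinal.aleph0) (hbc : b.card ≤ Cardinal.aleph0)
    (k : ℕ) (hk : 1 < k)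
    (h : ToPlain2 ((ω : Ordinal) ^ a) ((ω : Ordinal) ^ (1 + b)) k) :
    ToPlain2 ((ω : Ordinal) ^ (a + b)) ((ω : Ordinal) ^ (1 + b)) (k + 1) :=
  stmt13_general a b ha0 hbc k h
end
end
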